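/- arXiv:2406.07897 — 7 statements merged into one kernel-verified Lean document; each statement's English description precedes it below -/
import Mathlib

section
/- Let V_s(t) = 1 - e^{-αt} Σ_{k=0}^{s-1} (αt)^k / k!. If αt = s + ln(1/ε) - 1 - ln 2 with s ≥ 2 an integer and 0 < ε ≤ 1/2, then 1 - V_s(t) ≥ ε. -/
open Real MeasureTheory Finset intervalIntegral

/-- The truncated exponential sum. -/
noncomputable def pss (n : ℕ) (x : ℝ) : ℝ := ∑ k ∈ Finset.range (n + 1), x ^ k / (Nat.factorial k)

lemma hasDerivAt_pss (n : ℕ) (x : ℝ) :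
    HasDerivAt (pss n) (∑ k ∈ Finset.range n, x ^ k / (Nat.factorial k)) x := by
  have h : HasDerivAt (pss n)
      (∑ k ∈ Finset.range (n + 1), (k : ℝ) * x ^ (k - 1) / (Nat.factorial k)) x := by
    apply HasDerivAt.fun_sum
    intro k _
    exact (hasDerivAt_pow k x).div_const _
  convert h using 1
  rw [Finset.sum_range_succ']
  simp only [Nat.cast_zero, Nat.factorial_zero, Nat.cast_one, zero_mul, zero_div, add_zero]
  apply Finset.sum_congr rfl
  intro i _
  have : ((i + 1 : ℕ) : ℝ) ≠ 0 := by positivity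
  rw [Nat.add_sub_cancel, Nat.factorial_succ]
  push_cast
  field_simp

lemma pss_zero (n : ℕ) : pss n 0 = 1 := by
  unfold pss
  rw [Finset.sum_eq_single 0]
  · simp
  · intro k _ hk
    simp [zero_pow hk]
  · simp

lemma hasDerivAt_g (n : ℕ) (x : ℝ) :
    HasDerivAt (fun y : ℝ => -(Real.exp (-y) * pss n y))
      (Real.exp (-x) * x ^ n / (Nat.factorial n)) x := by
  have he : HasDerivAt (fun y : ℝ => Real.exp (-y)) (-Real.exp (-x)) x := by
    simpa [Function.comp_def] using ((Real.hasDerivAt_exp (-x)).comp x (hasDerivAt_neg x))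
  have := (he.mul (hasDerivAt_pss n x)).neg
  refine this.congr_deriv ?_
  unfold pss
  rw [Finset.sum_range_succ]
  ring

lemma tendsto_g (n : ℕ) :
    Filter.Tendsto (fun y : ℝ => -(Real.exp (-y) * pss n y)) Filter.atTop (nhds 0) := by
  have : Filter.Tendsto (fun y : ℝ => Real.exp (-y) * pss n y) Filter.atTop (nhds 0) := by
    have h : ∀ y : ℝ, Real.exp (-y) * pss n y
        = ∑ k ∈ Finset.range (n + 1), (y ^ k * Real.exp (-y)) / (Nat.factorial k) := by
      intro y
      unfold pss
      rw [Finset.mul_sum]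
      apply Finset.sum_congr rfl
      intro k _
      ring
    simp only [h]
    have : Filter.Tendsto (fun y : ℝ => ∑ k ∈ Finset.range (n + 1),
        (y ^ k * Real.exp (-y)) / (Nat.factorial k)) Filter.atTop
        (nhds (∑ k ∈ Finset.range (n + 1), 0)) := by
      apply tendsto_finset_sum
      intro k _
      simpa using (tendsto_pow_mul_exp_neg_atTop_nhds_zero k).div_const (Nat.factorial k : ℝ)
    simpa using this
  simpa using this.neg

lemma integrableOn_f (n : ℕ) (x : ℝ) (hx : 0 ≤ x) :
    IntegrableOn (fun t : ℝ => Real.exp (-t) * t ^ n / (Nat.factorial n)) (Set.Ioi x) := by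
  apply integrableOn_Ioi_deriv_of_nonneg' (fun y _ => hasDerivAt_g n y)
  · intro y hy
    have hy0 : (0:ℝ) ≤ y := le_trans hx (le_of_lt hy)
    positivity
  · exact tendsto_g n

lemma integral_Ioi_f (n : ℕ) (x : ℝ) (hx : 0 ≤ x) :
    ∫ t in Set.Ioi x, Real.exp (-t) * t ^ n / (Nat.factorial n)
      = Real.exp (-x) * pss n x := by
  have := integral_Ioi_of_hasDerivAt_of_nonneg' (l := 0)
    (fun y _ => hasDerivAt_g n y)
    (fun y hy => by
      have hy0 : (0:ℝ) ≤ y := le_trans hx (le_of_lt hy)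
      positivity)
    (tendsto_g n)
  rw [this]
  ring

lemma integral_interval_f (n : ℕ) (a b : ℝ) :
    ∫ t in a..b, Real.exp (-t) * t ^ n / (Nat.factorial n)
      = Real.exp (-a) * pss n a - Real.exp (-b) * pss n b := by
  have hcont : Continuous (fun t : ℝ => Real.exp (-t) * t ^ n / (Nat.factorial n)) := by
    continuity
  have := intervalIntegral.integral_eq_sub_of_hasDerivAt
    (f := fun y : ℝ => -(Real.exp (-y) * pss n y))
    (fun y _ => hasDerivAt_g n y) (hcont.intervalIntegrable a b)
  rw [this]
  ring

/-- `(2 - x) * exp x ≤ 2 + x` for `x ≥ 0`. -/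
lemma two_sub_mul_exp_le (x : ℝ) (hx : 0 ≤ x) : (2 - x) * Real.exp x ≤ 2 + x := by
  have hmono : Monotone (fun y : ℝ => 2 + y - (2 - y) * Real.exp y) := by
    apply monotone_of_hasDerivAt_nonneg (f' := fun y => 1 - (1 - y) * Real.exp y)
    · intro y
      have h1 : HasDerivAt (fun y : ℝ => (2 - y) * Real.exp y)
          ((0 - 1) * Real.exp y + (2 - y) * Real.exp y) y := by
        have := ((hasDerivAt_const y (2:ℝ)).sub (hasDerivAt_id y)).mul (Real.hasDerivAt_exp y)
        simpa [id_eq, Pi.sub_def, Pi.mul_def] using this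
      have h2 : HasDerivAt (fun y : ℝ => 2 + y - (2 - y) * Real.exp y)
          ((0 + 1) - ((0 - 1) * Real.exp y + (2 - y) * Real.exp y)) y := by
        have := ((hasDerivAt_const y (2:ℝ)).add (hasDerivAt_id y)).sub h1
        simpa [id_eq, Pi.sub_def, Pi.add_def] using this
      convert h2 using 1
      ring
    · intro y
      simp only [Pi.zero_apply, sub_nonneg]
      have h3 : (1 - y) ≤ Real.exp (-y) := by
        have := Real.add_one_le_exp (-y)
        linarith
      calc (1 - y) * Real.exp y ≤ Real.exp (-y) * Real.exp y :=
            mul_le_mul_of_nonneg_right h3 (Real.exp_pos y).le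
        _ = 1 := by rw [← Real.exp_add]; simp
  have := hmono hx
  simp only [Real.exp_zero] at this
  linarith

/-- Pointwise reflection inequality for the Gamma integrand. -/
lemma pointwise_refl (n : ℕ) (hn : 1 ≤ n) (u : ℝ) (hu0 : 0 ≤ u) (hun : u ≤ (n : ℝ)) :
    Real.exp (-((n : ℝ) - u)) * ((n : ℝ) - u) ^ n / (Nat.factorial n)
      ≤ Real.exp (-((n : ℝ) + u)) * ((n : ℝ) + u) ^ n / (Nat.factorial n) := by
  have hN : (0:ℝ) < n := by exact_mod_cast hn
  have hfac : (0:ℝ) < (Nat.factorial n : ℝ) := by positivity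
  apply div_le_div_of_nonneg_right _ hfac.le
  -- reduce to exp(2u) * (N - u)^n ≤ (N + u)^n
  have key : Real.exp (2 * u) * ((n : ℝ) - u) ^ n ≤ ((n : ℝ) + u) ^ n := by
    have hx2 : 2 * u / (n : ℝ) ≤ 2 := by
      rw [div_le_iff₀ hN]
      linarith
    have hx0 : 0 ≤ 2 * u / (n : ℝ) := by positivity
    have hscal := two_sub_mul_exp_le (2 * u / (n : ℝ)) hx0
    -- (N - u) * exp(2u/N) ≤ N + u
    have hstep : ((n : ℝ) - u) * Real.exp (2 * u / (n : ℝ)) ≤ (n : ℝ) + u := by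
      have h2 : (2 - 2 * u / (n : ℝ)) * ((n:ℝ)/2) = (n : ℝ) - u := by
        field_simp
      have h3 : (2 + 2 * u / (n : ℝ)) * ((n:ℝ)/2) = (n : ℝ) + u := by
        field_simp
      calc ((n : ℝ) - u) * Real.exp (2 * u / (n : ℝ))
          = ((2 - 2 * u / (n : ℝ)) * Real.exp (2 * u / (n : ℝ))) * ((n:ℝ)/2) := by
            rw [← h2]; ring
        _ ≤ (2 + 2 * u / (n : ℝ)) * ((n:ℝ)/2) := by
            apply mul_le_mul_of_nonneg_right hscal; positivity
        _ = (n : ℝ) + u := h3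
    have hnn : 0 ≤ ((n : ℝ) - u) * Real.exp (2 * u / (n : ℝ)) := by
      have : (0:ℝ) ≤ (n : ℝ) - u := by linarith
      positivity
    have hpow := pow_le_pow_left₀ hnn hstep n
    rw [mul_pow] at hpow
    have hexp : Real.exp (2 * u / (n : ℝ)) ^ n = Real.exp (2 * u) := by
      rw [← Real.exp_nat_mul]
      congr 1
      field_simp
    rw [hexp] at hpow
    linarith [hpow]
  have e1 : Real.exp (-((n : ℝ) - u)) = Real.exp (-((n : ℝ) + u)) * Real.exp (2 * u) := by
    rw [← Real.exp_add]; ring_nf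
  rw [e1]
  have h4 := mul_le_mul_of_nonneg_left key (Real.exp_pos (-((n : ℝ) + u))).le
  calc Real.exp (-((n : ℝ) + u)) * Real.exp (2 * u) * ((n : ℝ) - u) ^ n
      = Real.exp (-((n : ℝ) + u)) * (Real.exp (2 * u) * ((n : ℝ) - u) ^ n) := by ring
    _ ≤ Real.exp (-((n : ℝ) + u)) * ((n : ℝ) + u) ^ n := h4

/-- The Poisson median inequality: `e^{-n} Σ_{k=0}^{n} n^k/k! ≥ 1/2`. -/
lemma poisson_median (n : ℕ) (hn : 1 ≤ n) :
    (1:ℝ)/2 ≤ Real.exp (-(n : ℝ)) * pss n (n : ℝ) := by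
  set N : ℝ := (n : ℝ) with hNdef
  have hN : (0:ℝ) < N := by rw [hNdef]; exact_mod_cast hn
  set f : ℝ → ℝ := fun t => Real.exp (-t) * t ^ n / (Nat.factorial n) with hfdef
  have hcont : Continuous f := by
    unfold f; continuity
  set M : ℝ := Real.exp (-N) * pss n N with hMdef
  -- ∫_0^N f = 1 - M
  have hInt0N : ∫ t in (0:ℝ)..N, f t = 1 - M := by
    rw [integral_interval_f n 0 N]
    simp [pss_zero, M]
  -- reflection: ∫_0^N f = ∫ u in 0..N, f (N - u)
  have hrefl : ∫ u in (0:ℝ)..N, f (N - u) = ∫ t in (0:ℝ)..N, f t := by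
    rw [intervalIntegral.integral_comp_sub_left f N]
    simp
  have hshift : ∫ u in (0:ℝ)..N, f (N + u) = ∫ t in N..(N + N), f t := by
    rw [intervalIntegral.integral_comp_add_left f N]
    norm_num
  -- pointwise comparison
  have hmono : ∫ u in (0:ℝ)..N, f (N - u) ≤ ∫ u in (0:ℝ)..N, f (N + u) := by
    apply intervalIntegral.integral_mono_on hN.le
    · exact (hcont.comp (continuous_const.sub continuous_id)).intervalIntegrable 0 N
    · exact (hcont.comp (continuous_const.add continuous_id)).intervalIntegrable 0 N
    · intro u hu
      exact pointwise_refl n hn u hu.1 hu.2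
  -- ∫_N^{2N} f ≤ ∫_{Ioi N} f
  have hIoi : IntegrableOn f (Set.Ioi N) := integrableOn_f n N hN.le
  have htail : ∫ t in N..(N + N), f t ≤ ∫ t in Set.Ioi N, f t := by
    rw [intervalIntegral.integral_of_le (by linarith : N ≤ N + N)]
    apply setIntegral_mono_set hIoi
    · filter_upwards [ae_restrict_mem measurableSet_Ioi] with y hy
      have hy0 : (0:ℝ) ≤ y := le_trans hN.le (le_of_lt hy)
      have : (0:ℝ) ≤ Real.exp (-y) * y ^ n / (Nat.factorial n) := by positivity
      exact this
    · apply Filter.Eventually.of_forall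
      exact fun y hy => hy.1
  have hIN : ∫ t in Set.Ioi N, f t = M := by
    rw [hfdef, integral_Ioi_f n N hN.le]
  have : 1 - M ≤ M := by
    calc 1 - M = ∫ t in (0:ℝ)..N, f t := hInt0N.symm
      _ = ∫ u in (0:ℝ)..N, f (N - u) := hrefl.symm
      _ ≤ ∫ u in (0:ℝ)..N, f (N + u) := hmono
      _ = ∫ t in N..(N + N), f t := hshift
      _ ≤ ∫ t in Set.Ioi N, f t := htail
      _ = M := hIN
  linarith

/-- With `V_s(t) = 1 - e^{-αt} Σ_{k=0}^{s-1} (αt)^k / k!`, if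
`αt = s + ln(1/ε) - 1 - ln 2` with integer `s ≥ 2` and `0 < ε ≤ 1/2`, then
`1 - V_s(t) ≥ ε`. -/
theorem stmt2 (α t ε : ℝ) (s : ℕ) (hs : 2 ≤ s) (hε0 : 0 < ε) (hε : ε ≤ 1 / 2)
    (hα : 0 < α)
    (hat : α * t = (s : ℝ) + Real.log (1 / ε) - 1 - Real.log 2) :
    ε ≤ Real.exp (-(α * t)) * ∑ k ∈ Finset.range s, (α * t) ^ k / (Nat.factorial k) := by
  -- set n = s - 1
  obtain ⟨n, rfl⟩ : ∃ n, s = n + 1 := ⟨s - 1, by omega⟩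
  have hn : 1 ≤ n := by omega
  set x : ℝ := α * t with hxdef
  set c : ℝ := Real.log (1 / ε) - Real.log 2 with hcdef
  have hx : x = (n : ℝ) + c := by
    rw [hat, hcdef]
    push_cast
    ring
  have hc : 0 ≤ c := by
    rw [hcdef, sub_nonneg]
    apply Real.log_le_log (by norm_num)
    rw [le_div_iff₀ hε0]
    linarith
  have hexpc : Real.exp (-c) = 2 * ε := by
    rw [hcdef, neg_sub, Real.exp_sub, Real.exp_log (by norm_num : (0:ℝ) < 2),
      Real.exp_log (by positivity : (0:ℝ) < 1/ε)]
    field_simp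
  have hxN : (n : ℝ) ≤ x := by rw [hx]; linarith
  have hN0 : (0:ℝ) ≤ (n : ℝ) := Nat.cast_nonneg n
  -- termwise bound
  have hsum : pss n (n : ℝ) ≤ pss n x := by
    apply Finset.sum_le_sum
    intro k _
    apply div_le_div_of_nonneg_right _ (by positivity : (0:ℝ) ≤ (Nat.factorial k : ℝ))
    exact pow_le_pow_left₀ hN0 hxN k
  have hmed := poisson_median n hn
  have hexpx : Real.exp (-x) = Real.exp (-c) * Real.exp (-(n:ℝ)) := by
    rw [← Real.exp_add, hx]; ring_nf
  have hmain : ε ≤ Real.exp (-x) * pss n x := by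
    calc ε = (2 * ε) * (1/2) := by ring
      _ ≤ (2 * ε) * (Real.exp (-(n:ℝ)) * pss n (n : ℝ)) := by
          apply mul_le_mul_of_nonneg_left hmed (by linarith)
      _ = Real.exp (-c) * (Real.exp (-(n:ℝ)) * pss n (n : ℝ)) := by rw [hexpc]
      _ ≤ Real.exp (-c) * (Real.exp (-(n:ℝ)) * pss n x) := by
          apply mul_le_mul_of_nonneg_left _ (Real.exp_pos _).le
          exact mul_le_mul_of_nonneg_left hsum (Real.exp_pos _).le
      _ = Real.exp (-x) * pss n x := by rw [hexpx]; ring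
  simpa [pss] using hmain
end

section
/- Let M₊ = (S, A₊, T₊, g) be the A₊-skill augmentation of a DSMDP M₀ = (S, A₀, T₀, g) with finite |A₀| > 1, and p a probability distribution over solvable states. Then the ratio of p-learning difficulties satisfies J_learn(M₊; p) / J_learn(M₀; p) ≥ (|A₊| log|A₀| / (|A₀| log|A₊|)) · IC_{A₊}(M₀; p), where IC_{A₊}(M₀; p) = sup_{0<ε<1} (H[P₊] − log((1−ε)/ε)) / (E_{s∼p}[d₀(s)] · log(|A₀|/(1−ε))). -/
/-- A solution to state `s` in a DSMDP with transition `T` and goal `g`. -/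
def IsSol {S A : Type*} (T : S → A → S) (g : S) (s : S) (σ : List A) : Prop :=
  σ ≠ [] ∧ σ.foldl T s = g ∧ ∀ k < σ.length, (σ.take k).foldl T s ≠ g

/-- Shortest solution length `d(s)`. -/
noncomputable def dmin {S A : Type*} (T : S → A → S) (g : S) (s : S) : ℕ :=
  sInf {l : ℕ | ∃ σ : List A, IsSol T g s σ ∧ σ.length = l}

/-- Expansion of a sequence of skill-augmented actions into base actions, starting
from state `s`; `ex a s` is the base-action sequence produced by action `a` in state `s`. -/
def expandSkills {S A0 Ap : Type*} (T0 : S → A0 → S) (ex : Ap → S → List A0) :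
    S → List Ap → List A0
  | _, [] => []
  | s, a :: σ => ex a s ++ expandSkills T0 ex ((ex a s).foldl T0 s) σ

/-- A solution to `s` in the skill-augmented MDP: a nonempty sequence of augmented
actions whose expansion is a solution in the base MDP. -/
def IsSolAug {S A0 Ap : Type*} (T0 : S → A0 → S) (g : S) (ex : Ap → S → List A0)
    (s : S) (σ : List Ap) : Prop :=
  σ ≠ [] ∧ IsSol T0 g s (expandSkills T0 ex s σ)

/-- Shortest solution length in the skill-augmented MDP. -/
noncomputable def dminAug {S A0 Ap : Type*} (T0 : S → A0 → S) (g : S)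
    (ex : Ap → S → List A0) (s : S) : ℕ :=
  sInf {l : ℕ | ∃ σ : List Ap, IsSolAug T0 g ex s σ ∧ σ.length = l}

open Finset Real

/-- Expanding a lifted base solution gives back the base solution. -/
lemma expand_map_eq {S A0 Ap : Type*} (T0 : S → A0 → S) (ex : Ap → S → List A0)
    (i : A0 → Ap) (hbase : ∀ (a : A0) (s : S), ex (i a) s = [a]) :
    ∀ (σ : List A0) (s : S), expandSkills T0 ex s (σ.map i) = σ := by
  intro σ
  induction σ with
  | nil => intro s; rfl
  | cons a σ ih =>
    intro s
    simp only [List.map_cons, expandSkills, hbase, List.foldl_cons, List.foldl_nil]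
    simp [ih]

/-- Gibbs' inequality. -/
lemma gibbs_ineq {α : Type*} (F : Finset α) (P Q : α → ℝ)
    (hP : ∀ a ∈ F, 0 ≤ P a) (hQ : ∀ a ∈ F, 0 < Q a)
    (hP1 : ∑ a ∈ F, P a = 1) (hQ1 : ∑ a ∈ F, Q a ≤ 1) :
    ∑ a ∈ F, Real.negMulLog (P a) ≤ ∑ a ∈ F, P a * (- Real.log (Q a)) := by
  have key : ∀ a ∈ F, Real.negMulLog (P a) ≤ P a * (- Real.log (Q a)) + (Q a - P a) := by
    intro a ha
    rcases eq_or_lt_of_le (hP a ha) with h | h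
    · simp [← h, (hQ a ha).le]
    · have hlog : Real.log (Q a / P a) ≤ Q a / P a - 1 :=
        Real.log_le_sub_one_of_pos (div_pos (hQ a ha) h)
      rw [Real.log_div (hQ a ha).ne' h.ne'] at hlog
      have h2 := mul_le_mul_of_nonneg_left hlog h.le
      have h3 : P a * (Q a / P a - 1) = Q a - P a := by field_simp
      rw [h3] at h2
      have : Real.negMulLog (P a) = P a * (-Real.log (Q a)) + P a * (Real.log (Q a) - Real.log (P a)) := by
        simp [Real.negMulLog]; ring
      rw [this]
      linarith
  calc ∑ a ∈ F, Real.negMulLog (P a) ≤ ∑ a ∈ F, (P a * (- Real.log (Q a)) + (Q a - P a)) :=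
        Finset.sum_le_sum key
    _ = ∑ a ∈ F, P a * (- Real.log (Q a)) + ((∑ a ∈ F, Q a) - 1) := by
        rw [Finset.sum_add_distrib, Finset.sum_sub_distrib, hP1]
    _ ≤ ∑ a ∈ F, P a * (- Real.log (Q a)) := by linarith

/-- At most `K^l` lists of length `l`. -/
lemma card_filter_length_le {Ap : Type*} [Fintype Ap] [DecidableEq Ap] (hK : 1 ≤ Fintype.card Ap)
    (F : Finset (List Ap)) (l : ℕ) :
    (F.filter (fun σ => σ.length = l)).card ≤ Fintype.card Ap ^ l := by
  have : Nonempty Ap := Fintype.card_pos_iff.mp hK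
  obtain ⟨a0⟩ := this
  calc (F.filter (fun σ => σ.length = l)).card
      ≤ (Finset.univ : Finset (Fin l → Ap)).card := by
        apply Finset.card_le_card_of_injOn (fun (σ : List Ap) (j : Fin l) => σ.getD j a0)
          (fun σ _ => Finset.mem_univ _)
        intro σ₁ h₁ σ₂ h₂ hfe
        simp only [Finset.coe_filter, Set.mem_setOf_eq, Finset.mem_filter] at h₁ h₂
        refine List.ext_getElem (h₁.2.trans h₂.2.symm) ?_
        intro n hn1 hn2
        have hn : n < l := h₁.2 ▸ hn1
        have := congrFun hfe ⟨n, hn⟩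
        simpa [List.getD_eq_getElem?_getD, List.getElem?_eq_getElem, hn1, hn2] using this
    _ = Fintype.card Ap ^ l := by rw [Finset.card_univ, Fintype.card_fun, Fintype.card_fin]

/-- Kraft-type bound: total `Q`-mass of a finite set of nonempty lists is at most 1. -/
lemma qsum_le_one {Ap : Type*} [Fintype Ap] [DecidableEq Ap] (hK : 1 ≤ Fintype.card Ap)
    (F : Finset (List Ap)) (hne : ∀ σ ∈ F, σ ≠ []) {ε : ℝ} (hε0 : 0 < ε) (hε1 : ε < 1) :
    ∑ σ ∈ F, ε * (1 - ε) ^ (σ.length - 1) / (Fintype.card Ap : ℝ) ^ σ.length ≤ 1 := by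
  classical
  set K := Fintype.card Ap with hKdef
  have hKpos : (0:ℝ) < K := by exact_mod_cast hK
  have hr0 : (0:ℝ) < 1 - ε := by linarith
  have hr1 : 1 - ε < 1 := by linarith
  set q : ℕ → ℝ := fun l => ε * (1 - ε) ^ (l - 1) / (K : ℝ) ^ l with hq
  have hqnn : ∀ l, 0 ≤ q l := fun l =>
    div_nonneg (mul_nonneg hε0.le (pow_nonneg hr0.le _)) (pow_nonneg hKpos.le _)
  have step1 : ∑ σ ∈ F, q σ.length
      = ∑ l ∈ F.image List.length, ∑ σ ∈ F.filter (fun σ => σ.length = l), q σ.length := by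
    rw [Finset.sum_fiberwise_of_maps_to (fun σ hσ => Finset.mem_image_of_mem _ hσ)]
  have step2 : ∀ l ∈ F.image List.length,
      ∑ σ ∈ F.filter (fun σ => σ.length = l), q σ.length ≤ ε * (1 - ε) ^ (l - 1) := by
    intro l hl
    have : ∑ σ ∈ F.filter (fun σ => σ.length = l), q σ.length
        = (F.filter (fun σ => σ.length = l)).card * q l := by
      rw [Finset.sum_congr rfl (fun σ hσ => by rw [(Finset.mem_filter.mp hσ).2]),
        Finset.sum_const, nsmul_eq_mul]
    rw [this]
    have hcard : ((F.filter (fun σ => σ.length = l)).card : ℝ) ≤ (K : ℝ) ^ l := by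
      exact_mod_cast (card_filter_length_le hK F l).trans_eq (by push_cast; ring)
    calc ((F.filter (fun σ => σ.length = l)).card : ℝ) * q l
        ≤ (K : ℝ) ^ l * q l := by
          exact mul_le_mul_of_nonneg_right hcard (hqnn l)
      _ = ε * (1 - ε) ^ (l - 1) := by
          rw [hq]; field_simp
  have hl1 : ∀ l ∈ F.image List.length, 1 ≤ l := by
    intro l hl
    obtain ⟨σ, hσ, rfl⟩ := Finset.mem_image.mp hl
    exact List.length_pos_iff.mpr (hne σ hσ)
  -- reindex by l - 1
  have step3 : ∑ j ∈ (F.image List.length).image (· - 1), ε * (1 - ε) ^ j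
      = ∑ l ∈ F.image List.length, ε * (1 - ε) ^ (l - 1) :=
    Finset.sum_image (fun x hx y hy h => by
      have := hl1 x hx; have := hl1 y hy; omega)
  obtain ⟨N, hN⟩ := Finset.exists_nat_subset_range ((F.image List.length).image (· - 1))
  have step4 : ∑ j ∈ (F.image List.length).image (· - 1), ε * (1 - ε) ^ j
      ≤ ∑ j ∈ Finset.range N, ε * (1 - ε) ^ j :=
    Finset.sum_le_sum_of_subset_of_nonneg hN
      (fun j _ _ => mul_nonneg hε0.le (pow_nonneg hr0.le _))
  have step5 : ∑ j ∈ Finset.range N, ε * (1 - ε) ^ j ≤ 1 := by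
    rw [← Finset.mul_sum, geom_sum_eq (by linarith : (1:ℝ) - ε ≠ 1)]
    have hpow : (0:ℝ) ≤ (1 - ε) ^ N := pow_nonneg hr0.le _
    have : ε * (((1 - ε) ^ N - 1) / (1 - ε - 1)) = 1 - (1 - ε) ^ N := by
      field_simp
      rw [show (1:ℝ) - ε - 1 = -ε by ring, div_neg, mul_div_cancel_left₀ _ hε0.ne']
      ring
    rw [this]; linarith
  calc ∑ σ ∈ F, ε * (1 - ε) ^ (σ.length - 1) / (Fintype.card Ap : ℝ) ^ σ.length
      = ∑ σ ∈ F, q σ.length := rfl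
    _ ≤ ∑ l ∈ F.image List.length, ε * (1 - ε) ^ (l - 1) := by
        rw [step1]; exact Finset.sum_le_sum step2
    _ = ∑ j ∈ (F.image List.length).image (· - 1), ε * (1 - ε) ^ j := step3.symm
    _ ≤ 1 := step4.trans step5

/-- The entropy of the canonical-solution distribution is bounded. -/
lemma entropy_bound {S Ap : Type*} [Fintype S] [Fintype Ap] [DecidableEq Ap]
    (p : S → ℝ) (hp0 : ∀ s, 0 ≤ p s) (hp1 : ∑ s, p s = 1)
    (c : S → List Ap) (len : S → ℕ)
    (hc : ∀ s, p s ≠ 0 → c s ≠ [] ∧ (c s).length = len s)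
    (hK : 1 ≤ Fintype.card Ap) {ε : ℝ} (hε0 : 0 < ε) (hε1 : ε < 1) :
    ∑ σ ∈ Finset.univ.image c,
        Real.negMulLog (∑ s ∈ Finset.univ.filter (fun s => c s = σ), p s)
      ≤ Real.log ((1 - ε) / ε)
        + (∑ s, p s * len s) * (Real.log (Fintype.card Ap) - Real.log (1 - ε)) := by
  classical
  set K := Fintype.card Ap with hKdef
  have hKpos : (0:ℝ) < K := by exact_mod_cast hK
  have hr0 : (0:ℝ) < 1 - ε := by linarith
  set P : List Ap → ℝ := fun σ => ∑ s ∈ Finset.univ.filter (fun s => c s = σ), p s with hPdef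
  have hPnn : ∀ σ, 0 ≤ P σ := fun σ => Finset.sum_nonneg (fun s _ => hp0 s)
  set I : Finset (List Ap) := Finset.univ.image c with hIdef
  set F : Finset (List Ap) := I.filter (fun σ => P σ ≠ 0) with hFdef
  -- restrict to nonzero fibers
  have hentF : ∑ σ ∈ I, Real.negMulLog (P σ) = ∑ σ ∈ F, Real.negMulLog (P σ) := by
    rw [hFdef]
    rw [Finset.sum_filter_of_ne]
    intro σ _ h hP0
    exact h (by rw [hP0, Real.negMulLog_zero])
  -- fibers are nonempty solutions
  have hFne : ∀ σ ∈ F, σ ≠ [] := by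
    intro σ hσ
    obtain ⟨s, _, hs⟩ := Finset.exists_ne_zero_of_sum_ne_zero (Finset.mem_filter.mp hσ).2
    have hcs : c s = σ := by
      have := Finset.mem_filter.mp ‹s ∈ Finset.univ.filter (fun s => c s = σ)›
      exact this.2
    exact hcs ▸ (hc s hs).1
  -- total mass one
  have hP1 : ∑ σ ∈ F, P σ = 1 := by
    have h1 : ∑ σ ∈ I, P σ = 1 := by
      rw [hPdef, hIdef,
        Finset.sum_fiberwise_of_maps_to (fun s _ => Finset.mem_image_of_mem c (Finset.mem_univ s))]
      exact hp1
    rw [hFdef, Finset.sum_filter_ne_zero, h1]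
  -- expected length
  have hX : ∑ σ ∈ F, P σ * σ.length = ∑ s, p s * len s := by
    have h1 : ∑ σ ∈ I, P σ * σ.length = ∑ s, p s * len s := by
      rw [hPdef, hIdef]
      have : ∀ σ ∈ Finset.univ.image c,
          (∑ s ∈ Finset.univ.filter (fun s => c s = σ), p s) * (σ.length : ℝ)
          = ∑ s ∈ Finset.univ.filter (fun s => c s = σ), p s * (c s).length := by
        intro σ hσ
        rw [Finset.sum_mul]
        refine Finset.sum_congr rfl (fun s hs => ?_)
        rw [(Finset.mem_filter.mp hs).2]
      rw [Finset.sum_congr rfl this,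
        Finset.sum_fiberwise_of_maps_to (fun s _ => Finset.mem_image_of_mem c (Finset.mem_univ s))]
      refine Finset.sum_congr rfl (fun s _ => ?_)
      by_cases hps : p s = 0
      · simp [hps]
      · rw [(hc s hps).2]
    rw [hFdef, ← h1]
    symm
    rw [Finset.sum_filter_of_ne]
    intro σ _ h hP0
    exact h (by rw [hP0, zero_mul])
  -- the Kraft weights
  set Q : List Ap → ℝ := fun σ => ε * (1 - ε) ^ (σ.length - 1) / (K : ℝ) ^ σ.length with hQdef
  have hQpos : ∀ σ ∈ F, 0 < Q σ :=
    fun σ _ => div_pos (mul_pos hε0 (pow_pos hr0 _)) (pow_pos hKpos _)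
  have hQ1 : ∑ σ ∈ F, Q σ ≤ 1 := qsum_le_one hK F hFne hε0 hε1
  have hgibbs := gibbs_ineq F P Q (fun σ _ => hPnn σ) hQpos hP1 hQ1
  -- compute the cross entropy
  have hcross : ∑ σ ∈ F, P σ * (- Real.log (Q σ))
      = Real.log ((1 - ε) / ε)
        + (∑ s, p s * len s) * (Real.log (K : ℝ) - Real.log (1 - ε)) := by
    have hterm : ∀ σ ∈ F, P σ * (- Real.log (Q σ))
        = P σ * (- Real.log ε + Real.log (1 - ε))
          + (P σ * σ.length) * (Real.log (K : ℝ) - Real.log (1 - ε)) := by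
      intro σ hσ
      have hl1 : 1 ≤ σ.length := List.length_pos_iff.mpr (hFne σ hσ)
      have hlog : Real.log (Q σ)
          = Real.log ε + ((σ.length : ℝ) - 1) * Real.log (1 - ε)
            - (σ.length : ℝ) * Real.log (K : ℝ) := by
        rw [hQdef]
        rw [Real.log_div (by positivity) (by positivity), Real.log_mul hε0.ne' (by positivity),
          Real.log_pow, Real.log_pow]
        have : ((σ.length - 1 : ℕ) : ℝ) = (σ.length : ℝ) - 1 := by
          push_cast [Nat.cast_sub hl1]; ring
        rw [this]
      rw [hlog]; ring
    rw [Finset.sum_congr rfl hterm, Finset.sum_add_distrib, ← Finset.sum_mul, ← Finset.sum_mul,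
      hP1, hX, one_mul, Real.log_div hr0.ne' hε0.ne']
    ring
  calc ∑ σ ∈ I, Real.negMulLog (P σ) = ∑ σ ∈ F, Real.negMulLog (P σ) := hentF
    _ ≤ ∑ σ ∈ F, P σ * (- Real.log (Q σ)) := hgibbs
    _ = _ := hcross

/-- Theorem 4.2: `J_learn(M₊;p)/J_learn(M₀;p) ≥ (|A₊| log|A₀| / (|A₀| log|A₊|)) · IC_{A₊}(M₀;p)`,
where `IC_{A₊}` is the `A₊`-merged `p`-incompressibility, defined via the entropy-maximizing
choice of canonical shortest solutions in `M₊`. -/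
theorem stmt4 {S A0 Ap : Type*} [Fintype S] [Fintype A0] [Fintype Ap] [DecidableEq Ap]
    (T0 : S → A0 → S) (g : S) (hA0 : 1 < Fintype.card A0)
    (ex : Ap → S → List A0) (i : A0 → Ap) (hi : Function.Injective i)
    (hbase : ∀ (a : A0) (s : S), ex (i a) s = [a])
    (p : S → ℝ) (hp0 : ∀ s, 0 ≤ p s) (hp1 : ∑ s, p s = 1)
    (hsupp : ∀ s, p s ≠ 0 → ∃ σ : List A0, IsSol T0 g s σ) :
    let d0 : S → ℕ := dmin T0 g
    let dp : S → ℕ := dminAug T0 g ex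
    let Jlearn0 : ℝ := (Fintype.card A0 : ℝ) * ∑ s, p s * d0 s
    let Jlearnp : ℝ := (Fintype.card Ap : ℝ) * ∑ s, p s * dp s
    let ent : (S → List Ap) → ℝ := fun c =>
      ∑ σ ∈ Finset.univ.image c,
        Real.negMulLog (∑ s ∈ Finset.univ.filter (fun s => c s = σ), p s)
    let HP : ℝ := sSup {h : ℝ | ∃ c : S → List Ap,
      (∀ s, p s ≠ 0 → IsSolAug T0 g ex s (c s) ∧ (c s).length = dp s) ∧ h = ent c}
    let IC : ℝ := sSup {r : ℝ | ∃ ε : ℝ, 0 < ε ∧ ε < 1 ∧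
      r = (HP - Real.log ((1 - ε) / ε)) /
        ((∑ s, p s * d0 s) * Real.log ((Fintype.card A0 : ℝ) / (1 - ε)))}
    Jlearnp / Jlearn0 ≥
      ((Fintype.card Ap : ℝ) * Real.log (Fintype.card A0)) /
        ((Fintype.card A0 : ℝ) * Real.log (Fintype.card Ap)) * IC := by
  intro d0 dp Jlearn0 Jlearnp ent HP IC
  classical
  set K0 := Fintype.card A0 with hK0def
  set Kp := Fintype.card Ap with hKpdef
  have hK0le : K0 ≤ Kp := Fintype.card_le_of_injective i hi
  have hKp : 1 < Kp := lt_of_lt_of_le hA0 hK0le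
  have hK0R : (1:ℝ) < K0 := by exact_mod_cast hA0
  have hKpR : (1:ℝ) < Kp := by exact_mod_cast hKp
  have hlogK0 : 0 < Real.log K0 := Real.log_pos hK0R
  have hlogKp : 0 < Real.log Kp := Real.log_pos hKpR
  have hlogle : Real.log K0 ≤ Real.log Kp :=
    Real.log_le_log (by linarith) (by exact_mod_cast hK0le)
  -- canonical shortest augmented solutions exist
  have hdp_spec : ∀ s, p s ≠ 0 → ∃ σ : List Ap, IsSolAug T0 g ex s σ ∧ σ.length = dp s := by
    intro s hs
    obtain ⟨σ0, hσ0⟩ := hsupp s hs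
    have hmem : dp s ∈ {l : ℕ | ∃ σ : List Ap, IsSolAug T0 g ex s σ ∧ σ.length = l} := by
      apply Nat.sInf_mem
      refine ⟨σ0.length, σ0.map i, ⟨?_, ?_⟩, by simp⟩
      · simpa using hσ0.1
      · rw [expand_map_eq T0 ex i hbase]; exact hσ0
    exact hmem
  have hdp1 : ∀ s, p s ≠ 0 → 1 ≤ dp s := by
    intro s hs
    obtain ⟨σ, hσ, hlen⟩ := hdp_spec s hs
    rw [← hlen]
    exact List.length_pos_iff.mpr hσ.1
  have hd01 : ∀ s, p s ≠ 0 → 1 ≤ d0 s := by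
    intro s hs
    obtain ⟨σ0, hσ0⟩ := hsupp s hs
    have hmem : d0 s ∈ {l : ℕ | ∃ σ : List A0, IsSol T0 g s σ ∧ σ.length = l} :=
      Nat.sInf_mem ⟨σ0.length, σ0, hσ0, rfl⟩
    obtain ⟨σ, hσ, hlen⟩ := hmem
    rw [← hlen]
    exact List.length_pos_iff.mpr hσ.1
  set D : ℝ := ∑ s, p s * d0 s with hDdef
  set X : ℝ := ∑ s, p s * dp s with hXdef
  have hD1 : 1 ≤ D := by
    rw [hDdef, ← hp1]
    refine Finset.sum_le_sum (fun s _ => ?_)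
    by_cases hs : p s = 0
    · simp [hs]
    · have h1 : (1:ℝ) ≤ (d0 s : ℝ) := by exact_mod_cast hd01 s hs
      nlinarith [hp0 s]
  have hX1 : 1 ≤ X := by
    rw [hXdef, ← hp1]
    refine Finset.sum_le_sum (fun s _ => ?_)
    by_cases hs : p s = 0
    · simp [hs]
    · have h1 : (1:ℝ) ≤ (dp s : ℝ) := by exact_mod_cast hdp1 s hs
      nlinarith [hp0 s]
  have hD0 : 0 < D := by linarith
  have hX0 : 0 < X := by linarith
  -- bound on HP
  have hHPbound : ∀ ε : ℝ, 0 < ε → ε < 1 →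
      HP ≤ Real.log ((1 - ε) / ε) + X * (Real.log Kp - Real.log (1 - ε)) := by
    intro ε hε0 hε1
    have hHPne : {h : ℝ | ∃ c : S → List Ap,
        (∀ s, p s ≠ 0 → IsSolAug T0 g ex s (c s) ∧ (c s).length = dp s) ∧ h = ent c}.Nonempty := by
      refine ⟨ent (fun s => if h : p s ≠ 0 then (hdp_spec s h).choose else []),
        fun s => if h : p s ≠ 0 then (hdp_spec s h).choose else [], fun s hs => ?_, rfl⟩
      simp only [dif_pos hs]
      exact (hdp_spec s hs).choose_spec
    refine csSup_le hHPne ?_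
    rintro h ⟨c, hc, rfl⟩
    have := entropy_bound p hp0 hp1 c dp
      (fun s hs => ⟨((hc s hs).1).1, (hc s hs).2⟩) (by omega : 1 ≤ Fintype.card Ap) hε0 hε1
    exact this
  -- bound on IC
  have hIC : IC ≤ X * Real.log Kp / (D * Real.log K0) := by
    refine csSup_le ⟨(HP - Real.log ((1 - 1/2) / (1/2))) /
        ((∑ s, p s * d0 s) * Real.log ((K0 : ℝ) / (1 - 1/2))),
        1/2, by norm_num, by norm_num, rfl⟩ ?_
    rintro r ⟨ε, hε0, hε1, rfl⟩
    have hr0 : (0:ℝ) < 1 - ε := by linarith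
    have ht : 0 < -Real.log (1 - ε) := by
      have := Real.log_neg hr0 (by linarith)
      linarith
    have hlogq : Real.log ((K0 : ℝ) / (1 - ε)) = Real.log K0 - Real.log (1 - ε) :=
      Real.log_div (by positivity) hr0.ne'
    have hden : 0 < D * Real.log ((K0 : ℝ) / (1 - ε)) := by
      rw [hlogq]
      have : 0 < Real.log K0 - Real.log (1 - ε) := by linarith
      exact mul_pos hD0 this
    have hnum : HP - Real.log ((1 - ε) / ε) ≤ X * (Real.log Kp - Real.log (1 - ε)) := by
      have := hHPbound ε hε0 hε1
      linarith
    calc (HP - Real.log ((1 - ε) / ε)) / ((∑ s, p s * d0 s) * Real.log ((K0 : ℝ) / (1 - ε)))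
        ≤ X * (Real.log Kp - Real.log (1 - ε)) / (D * Real.log ((K0 : ℝ) / (1 - ε))) := by
          rw [← hDdef]
          exact (div_le_div_iff_of_pos_right hden).mpr hnum
      _ ≤ X * Real.log Kp / (D * Real.log K0) := by
          rw [hlogq, div_le_div_iff₀ (by nlinarith) (by positivity)]
          nlinarith [mul_nonneg (mul_nonneg hX0.le hD0.le) ht.le]
  -- conclude
  have hC0 : 0 ≤ ((Kp : ℝ) * Real.log K0) / ((K0 : ℝ) * Real.log Kp) := by positivity
  have hfinal : ((Kp : ℝ) * Real.log K0) / ((K0 : ℝ) * Real.log Kp)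
      * (X * Real.log Kp / (D * Real.log K0)) = Jlearnp / Jlearn0 := by
    have hJ0 : Jlearn0 = (K0 : ℝ) * D := rfl
    have hJp : Jlearnp = (Kp : ℝ) * X := rfl
    rw [hJ0, hJp]
    field_simp
  calc ((Kp : ℝ) * Real.log K0) / ((K0 : ℝ) * Real.log Kp) * IC
      ≤ ((Kp : ℝ) * Real.log K0) / ((K0 : ℝ) * Real.log Kp)
        * (X * Real.log Kp / (D * Real.log K0)) := mul_le_mul_of_nonneg_left hIC hC0
    _ = Jlearnp / Jlearn0 := hfinal
end

section
/- Let M₊ = (S, A₊, T₊, g) be a skill augmentation of a DSMDP with finite action space, p a probability distribution over solvable states, and 0 < δ < 1. Then J_explore(M₊; p, δ) ≥ H[p] − log(((1−δ)/δ) · D(M₊; δ)), where J_explore(M; p, δ) = E_{s∼p}[−log q_{M,δ}(s)], q_{M,δ}(s) = Σ_{σ∈Sol(s)} ((1−δ)/|A|)^{|σ|}, and D(M; δ) = Σ_s (δ/(1−δ)) q_{M,δ}(s). -/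
private lemma card_filter_length_le_s7 {Ap : Type*} [Fintype Ap] [Nonempty Ap] [DecidableEq Ap]
    (n : ℕ) (v : Finset (List Ap)) (hv : ∀ σ ∈ v, σ.length = n) :
    v.card ≤ Fintype.card Ap ^ n := by
  classical
  have h := Finset.card_le_card_of_injOn
      (f := fun (σ : List Ap) (k : Fin n) => σ.getD k (Classical.arbitrary Ap))
      (fun σ _ => Finset.mem_univ _) ?_ (s := v)
  · calc v.card ≤ (Finset.univ : Finset (Fin n → Ap)).card := h
      _ = Fintype.card Ap ^ n := by
        simp [Finset.card_univ, Fintype.card_fun]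
  · intro σ₁ h₁ σ₂ h₂ hfe
    apply List.ext_getElem (by rw [hv _ h₁, hv _ h₂])
    intro k hk1 hk2
    have hk : k < n := by rw [← hv _ h₁]; exact hk1
    have := congrFun hfe ⟨k, hk⟩
    simpa only [List.getD_eq_getElem σ₁ _ hk1, List.getD_eq_getElem σ₂ _ hk2] using this

private lemma summable_pow_length {Ap : Type*} [Fintype Ap] [Nonempty Ap] {c : ℝ}
    (hc0 : 0 ≤ c) (hc : (Fintype.card Ap : ℝ) * c < 1) :
    Summable (fun σ : List Ap => c ^ σ.length) := by
  classical
  set r : ℝ := (Fintype.card Ap : ℝ) * c with hr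
  have hr0 : 0 ≤ r := mul_nonneg (by positivity) hc0
  apply summable_of_sum_le (c := (1 - r)⁻¹) (fun σ => pow_nonneg hc0 _)
  intro u
  set N : ℕ := u.sup List.length + 1 with hN
  have hmaps : ∀ σ ∈ u, σ.length ∈ Finset.range N := by
    intro σ hσ
    exact Finset.mem_range.mpr (Nat.lt_succ_of_le (Finset.le_sup hσ))
  calc ∑ σ ∈ u, c ^ σ.length
      = ∑ n ∈ Finset.range N, ∑ σ ∈ u.filter (fun σ => σ.length = n), c ^ σ.length :=
        (Finset.sum_fiberwise_of_maps_to hmaps _).symm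
    _ ≤ ∑ n ∈ Finset.range N, r ^ n := by
        apply Finset.sum_le_sum
        intro n _
        have h1 : ∑ σ ∈ u.filter (fun σ => σ.length = n), c ^ σ.length
            = (u.filter (fun σ => σ.length = n)).card • c ^ n := by
          rw [← Finset.sum_const]
          apply Finset.sum_congr rfl
          intro σ hσ
          rw [(Finset.mem_filter.mp hσ).2]
        rw [h1, nsmul_eq_mul, hr, mul_pow]
        apply mul_le_mul_of_nonneg_right _ (pow_nonneg hc0 _)
        have := card_filter_length_le_s7 n (u.filter (fun σ => σ.length = n))
          (fun σ hσ => (Finset.mem_filter.mp hσ).2)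
        calc ((u.filter (fun σ => σ.length = n)).card : ℝ)
            ≤ ((Fintype.card Ap ^ n : ℕ) : ℝ) := by exact_mod_cast this
          _ = (Fintype.card Ap : ℝ) ^ n := by push_cast; ring
    _ ≤ ∑' n : ℕ, r ^ n :=
        Summable.sum_le_tsum _ (fun n _ => pow_nonneg hr0 _) (summable_geometric_of_lt_one hr0 hc)
    _ = (1 - r)⁻¹ := tsum_geometric_of_lt_one hr0 hc

/-- Theorem 5.2 (first half): for a skill augmentation `M₊` of a DSMDP,
`J_explore(M₊; p, δ) ≥ H[p] − log(((1−δ)/δ) · D(M₊; δ))`. -/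
theorem stmt7 {S A0 Ap : Type*} [Fintype S] [Fintype A0] [Fintype Ap]
    (T0 : S → A0 → S) (g : S)
    (ex : Ap → S → List A0) (i : A0 → Ap) (hi : Function.Injective i)
    (hbase : ∀ (a : A0) (s : S), ex (i a) s = [a])
    (δ : ℝ) (hδ0 : 0 < δ) (hδ1 : δ < 1)
    (p : S → ℝ) (hp0 : ∀ s, 0 ≤ p s) (hp1 : ∑ s, p s = 1)
    (hsupp : ∀ s, p s ≠ 0 → ∃ σ : List Ap, IsSolAug T0 g ex s σ) :
    let q : S → ℝ := fun s => ∑' σ : {σ : List Ap // IsSolAug T0 g ex s σ},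
      ((1 - δ) / (Fintype.card Ap : ℝ)) ^ σ.1.length
    let D : ℝ := ∑ s, (δ / (1 - δ)) * q s
    (∑ s, p s * (-Real.log (q s)))
      ≥ (∑ s, Real.negMulLog (p s)) - Real.log (((1 - δ) / δ) * D) := by
  classical
  intro q D
  -- find a state with positive probability
  obtain ⟨s₀, -, hps₀⟩ := Finset.exists_ne_zero_of_sum_ne_zero (by rw [hp1]; norm_num :
    ∑ s : S, p s ≠ 0)
  -- Ap is nonempty
  obtain ⟨σ₀, hσ₀⟩ := hsupp s₀ hps₀
  have hne : Nonempty Ap := by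
    obtain ⟨-, hexne, -, -⟩ := hσ₀
    obtain ⟨a, -⟩ := List.exists_mem_of_ne_nil _ hexne
    exact ⟨i a⟩
  have hcard : (0 : ℝ) < (Fintype.card Ap : ℝ) := by
    exact_mod_cast Fintype.card_pos
  set c : ℝ := (1 - δ) / (Fintype.card Ap : ℝ) with hc
  have hc0 : 0 < c := div_pos (by linarith) hcard
  have hcsum : Summable (fun σ : List Ap => c ^ σ.length) := by
    apply summable_pow_length hc0.le
    rw [hc, mul_div_cancel₀ _ (ne_of_gt hcard)]
    linarith
  have hqsummable : ∀ s, Summable (fun σ : {σ : List Ap // IsSolAug T0 g ex s σ} =>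
      c ^ σ.1.length) := fun s => hcsum.subtype _
  have hq0 : ∀ s, 0 ≤ q s := fun s => tsum_nonneg (fun σ => pow_nonneg hc0.le _)
  have hqpos : ∀ s, p s ≠ 0 → 0 < q s := by
    intro s hps
    obtain ⟨σ, hσ⟩ := hsupp s hps
    exact Summable.tsum_pos (hqsummable s) (fun σ => pow_nonneg hc0.le _) ⟨σ, hσ⟩
      (pow_pos hc0 _)
  set Q : ℝ := ∑ s, q s with hQdef
  have hQpos : 0 < Q :=
    Finset.sum_pos' (fun s _ => hq0 s) ⟨s₀, Finset.mem_univ _, hqpos s₀ hps₀⟩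
  have hQsum : ∑ s, q s / Q = 1 := by
    rw [← Finset.sum_div, ← hQdef, div_self (ne_of_gt hQpos)]
  -- the log argument equals Q
  have hDQ : ((1 - δ) / δ) * D = Q := by
    show ((1 - δ) / δ) * ∑ s, (δ / (1 - δ)) * q s = Q
    rw [← Finset.mul_sum, ← mul_assoc, ← hQdef]
    have h : (1 - δ) / δ * (δ / (1 - δ)) = 1 := by
      field_simp
      exact div_self (by linarith)
    rw [h, one_mul]
  -- pointwise bound
  have key : ∀ s, p s - q s / Q ≤
      p s * (Real.log (p s) - Real.log (q s) + Real.log Q) := by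
    intro s
    by_cases hps : p s = 0
    · rw [hps]
      simp only [zero_mul, zero_sub]
      have : 0 ≤ q s / Q := div_nonneg (hq0 s) hQpos.le
      linarith
    · have hp : 0 < p s := lt_of_le_of_ne (hp0 s) (Ne.symm hps)
      have hq : 0 < q s := hqpos s hps
      have hx : (0 : ℝ) < q s / (Q * p s) := by positivity
      have hlog := Real.log_le_sub_one_of_pos hx
      have hexp : Real.log (q s / (Q * p s))
          = Real.log (q s) - Real.log Q - Real.log (p s) := by
        rw [Real.log_div (ne_of_gt hq) (by positivity),
          Real.log_mul (ne_of_gt hQpos) (ne_of_gt hp)]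
        ring
      rw [hexp] at hlog
      have h2 : 1 - q s / (Q * p s) ≤
          Real.log (p s) - Real.log (q s) + Real.log Q := by linarith
      have h3 := mul_le_mul_of_nonneg_left h2 hp.le
      have h4 : p s * (1 - q s / (Q * p s)) = p s - q s / Q := by
        field_simp
      linarith [h3, h4 ▸ h3]
  have hsumkey : (0 : ℝ) ≤ ∑ s, p s * (Real.log (p s) - Real.log (q s) + Real.log Q) := by
    have h1 : ∑ s, (p s - q s / Q) ≤
        ∑ s, p s * (Real.log (p s) - Real.log (q s) + Real.log Q) :=
      Finset.sum_le_sum (fun s _ => key s)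
    have h2 : ∑ s, (p s - q s / Q) = 0 := by
      rw [Finset.sum_sub_distrib, hp1, hQsum]
      ring
    linarith
  have hexpand : ∑ s, p s * (Real.log (p s) - Real.log (q s) + Real.log Q)
      = (∑ s, p s * (-Real.log (q s))) - (∑ s, Real.negMulLog (p s)) + Real.log Q := by
    have h : ∀ s, p s * (Real.log (p s) - Real.log (q s) + Real.log Q)
        = p s * (-Real.log (q s)) - Real.negMulLog (p s) + p s * Real.log Q := by
      intro s
      simp only [Real.negMulLog]
      ring
    rw [Finset.sum_congr rfl (fun s _ => h s), Finset.sum_add_distrib,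
      Finset.sum_sub_distrib, ← Finset.sum_mul, hp1, one_mul]
  rw [ge_iff_le, hDQ]
  linarith [hexpand ▸ hsumkey]
end

section
/- Let M₀ be a solution-separable DSMDP with finite action space in which every state having a length-1 solution has only length-1 solutions, and let M₊ be a strict macroaction augmentation with |A₊| ≥ |A₀| + 1. Then Σ_{s: d₀(s)=1} |ρ_{M₊,δ}(s) − ρ_{M₀,δ}(s)| ≥ δ(1 − |A₀|/|A₊|) ≥ δ/(|A₀|+1), where ρ_{M,δ}(s) = Σ_{σ∈Sol_M(s)} δ(1−δ)^{|σ|−1}|A|^{−|σ|}. -/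
def IsSolMacro {S A0 Ap : Type*} (T0 : S → A0 → S) (g : S) (μ : Ap → List A0)
    (s : S) (σ : List Ap) : Prop :=
  σ ≠ [] ∧ IsSol T0 g s (σ.flatMap μ)

section Aux

variable {S A0 Ap : Type*}

lemma isSol_len_pos {T : S → A0 → S} {g s : S} {σ : List A0} (h : IsSol T g s σ) :
    1 ≤ σ.length := List.length_pos_iff.mpr h.1

lemma macro_single {T0 : S → A0 → S} {g : S} {μ : Ap → List A0} {i : A0 → Ap}
    (hbase : ∀ a : A0, μ (i a) = [a])
    (hmacro : ∀ a : Ap, a ∉ Set.range i → 1 < (μ a).length)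
    {s : S} {σ : List Ap} (hσ : IsSolMacro T0 g μ s σ)
    (h1 : (σ.flatMap μ).length = 1) : ∃ a : A0, σ = [i a] ∧ IsSol T0 g s [a] := by
  obtain ⟨hne, hsol⟩ := hσ
  have hlb : ∀ b : Ap, 1 ≤ (μ b).length := by
    intro b
    by_cases hb : b ∈ Set.range i
    · obtain ⟨a, rfl⟩ := hb
      simp [hbase]
    · exact le_of_lt (hmacro b hb)
  cases σ with
  | nil => exact absurd rfl hne
  | cons b t =>
    rw [List.flatMap_cons, List.length_append] at h1
    have hb1 : (μ b).length = 1 := by have := hlb b; omega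
    have hb : b ∈ Set.range i := by
      by_contra hb
      have := hmacro b hb
      omega
    obtain ⟨a, rfl⟩ := hb
    have ht : t = [] := by
      cases t with
      | nil => rfl
      | cons c u =>
        rw [List.flatMap_cons, List.length_append] at h1
        have := hlb c
        omega
    subst ht
    refine ⟨a, rfl, ?_⟩
    rw [List.flatMap_cons, List.flatMap_nil, List.append_nil, hbase] at hsol
    exact hsol

end Aux
/-- Key step of Theorem 5.7: in a solution-separable DSMDP where every state with a
length-1 solution has only length-1 solutions and every length-1 sequence solves some
state, for any strict macroaction augmentation,
`Σ_{s: d₀(s)=1} |ρ₊(s) − ρ₀(s)| ≥ δ(1 − |A₀|/|A₊|) ≥ δ/(|A₀|+1)`. -/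
theorem stmt13 {S A0 Ap : Type*} [Fintype S] [Fintype A0] [Fintype Ap]
    (T0 : S → A0 → S) (g : S)
    (hsep : ∀ (σ : List A0) (s s' : S), IsSol T0 g s σ → IsSol T0 g s' σ → s = s')
    (hlen1 : ∀ (s : S) (σ σ' : List A0), IsSol T0 g s σ → σ.length = 1 →
      IsSol T0 g s σ' → σ'.length = 1)
    (μ : Ap → List A0) (i : A0 → Ap) (hi : Function.Injective i)
    (hstrict : ¬ Function.Surjective i)
    (hbase : ∀ a : A0, μ (i a) = [a])
    (hmacro : ∀ a : Ap, a ∉ Set.range i → 1 < (μ a).length)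
    (hall1 : ∀ a : A0, ∃ s : S, IsSol T0 g s [a])
    (δ : ℝ) (hδ0 : 0 < δ) (hδ1 : δ < 1) :
    let ρ0 : S → ℝ := fun s => ∑' σ : {σ : List A0 // IsSol T0 g s σ},
      δ * (1 - δ) ^ (σ.1.length - 1) * (Fintype.card A0 : ℝ) ^ (-(σ.1.length : ℤ))
    let ρp : S → ℝ := fun s => ∑' σ : {σ : List Ap // IsSolMacro T0 g μ s σ},
      δ * (1 - δ) ^ (σ.1.length - 1) * (Fintype.card Ap : ℝ) ^ (-(σ.1.length : ℤ))
    (∑ s ∈ Finset.univ.filter (fun s => dmin T0 g s = 1), |ρp s - ρ0 s|)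
        ≥ δ * (1 - (Fintype.card A0 : ℝ) / (Fintype.card Ap : ℝ)) ∧
    δ * (1 - (Fintype.card A0 : ℝ) / (Fintype.card Ap : ℝ))
        ≥ δ / ((Fintype.card A0 : ℝ) + 1) := by
  classical
  intro ρ0 ρp
  -- cardinalities
  have hcardlt : Fintype.card A0 < Fintype.card Ap :=
    Fintype.card_lt_of_injective_not_surjective i hi hstrict
  have hA0pos : 0 < Fintype.card A0 := by
    by_contra h
    have hE : IsEmpty A0 := Fintype.card_eq_zero_iff.mp (by omega)
    have hAp : 0 < Fintype.card Ap := by omega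
    obtain ⟨b⟩ := Fintype.card_pos_iff.mp hAp
    have hb : b ∉ Set.range i := by rintro ⟨a, -⟩; exact hE.elim a
    have hlen := hmacro b hb
    have hne : μ b ≠ [] := by
      intro hnil; rw [hnil] at hlen; simp at hlen
    exact hE.elim ((μ b).head hne)
  set c0 : ℝ := (Fintype.card A0 : ℝ) with hc0
  set cp : ℝ := (Fintype.card Ap : ℝ) with hcp
  have hc0pos : (0:ℝ) < c0 := by rw [hc0]; exact_mod_cast hA0pos
  have hcple : c0 + 1 ≤ cp := by
    rw [hc0, hcp]
    exact_mod_cast hcardlt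
  have hcppos : (0:ℝ) < cp := by linarith
  -- the per-state length-1 property
  have hlen1' : ∀ s : S, dmin T0 g s = 1 → ∀ σ : List A0, IsSol T0 g s σ → σ.length = 1 := by
    intro s hs
    have hne : {l : ℕ | ∃ σ : List A0, IsSol T0 g s σ ∧ σ.length = l}.Nonempty := by
      by_contra h
      rw [Set.not_nonempty_iff_eq_empty] at h
      rw [dmin, h, Nat.sInf_empty] at hs
      exact one_ne_zero hs.symm
    have hmem := Nat.sInf_mem hne
    rw [← dmin, hs] at hmem
    obtain ⟨σ1, hσ1, hσ1len⟩ := hmem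
    exact fun σ h => hlen1 s σ1 σ hσ1 hσ1len h
  set n : S → ℕ := fun s => Nat.card {a : A0 // IsSol T0 g s [a]} with hn
  -- ρ0 value
  have hρ0 : ∀ s : S, dmin T0 g s = 1 → ρ0 s = (n s : ℝ) * (δ * c0⁻¹) := by
    intro s hs
    have h1 := hlen1' s hs
    set F : {a : A0 // IsSol T0 g s [a]} → {σ : List A0 // IsSol T0 g s σ} :=
      fun a => ⟨[a.1], a.2⟩ with hF
    have hFbij : Function.Bijective F := by
      constructor
      · rintro ⟨a, ha⟩ ⟨b, hb⟩ h
        simp only [F, Subtype.mk.injEq, List.cons.injEq, and_true] at h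
        exact Subtype.ext h
      · rintro ⟨σ, hσ⟩
        obtain ⟨a, rfl⟩ := List.length_eq_one_iff.mp (h1 σ hσ)
        exact ⟨⟨a, hσ⟩, rfl⟩
    calc ρ0 s = ∑' a : {a : A0 // IsSol T0 g s [a]},
        (fun σ : {σ : List A0 // IsSol T0 g s σ} =>
          δ * (1 - δ) ^ (σ.1.length - 1) * c0 ^ (-(σ.1.length : ℤ))) (F a) :=
        ((Equiv.ofBijective F hFbij).tsum_eq _).symm
      _ = ∑' _ : {a : A0 // IsSol T0 g s [a]}, δ * c0⁻¹ := by
          apply tsum_congr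
          intro a
          simp [F, zpow_neg]
      _ = (n s : ℝ) * (δ * c0⁻¹) := by
          rw [tsum_const, nsmul_eq_mul, hn]
  -- ρp value
  have hρp : ∀ s : S, dmin T0 g s = 1 → ρp s = (n s : ℝ) * (δ * cp⁻¹) := by
    intro s hs
    have h1 := hlen1' s hs
    set F : {a : A0 // IsSol T0 g s [a]} → {σ : List Ap // IsSolMacro T0 g μ s σ} :=
      fun a => ⟨[i a.1], List.cons_ne_nil _ _, by
        simpa [List.flatMap_cons, hbase] using a.2⟩ with hF
    have hFbij : Function.Bijective F := by
      constructor
      · rintro ⟨a, ha⟩ ⟨b, hb⟩ h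
        simp only [F, Subtype.mk.injEq, List.cons.injEq, and_true] at h
        have h' : [i a] = [i b] := congrArg Subtype.val h
        exact Subtype.ext (hi (List.cons.inj h').1)
      · rintro ⟨σ, hσ⟩
        obtain ⟨a, rfl, hsol⟩ := macro_single hbase hmacro hσ (h1 _ hσ.2)
        exact ⟨⟨a, hsol⟩, rfl⟩
    calc ρp s = ∑' a : {a : A0 // IsSol T0 g s [a]},
        (fun σ : {σ : List Ap // IsSolMacro T0 g μ s σ} =>
          δ * (1 - δ) ^ (σ.1.length - 1) * cp ^ (-(σ.1.length : ℤ))) (F a) :=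
        ((Equiv.ofBijective F hFbij).tsum_eq _).symm
      _ = ∑' _ : {a : A0 // IsSol T0 g s [a]}, δ * cp⁻¹ := by
          apply tsum_congr
          intro a
          simp [F, zpow_neg]
      _ = (n s : ℝ) * (δ * cp⁻¹) := by
          rw [tsum_const, nsmul_eq_mul, hn]
  set t := Finset.univ.filter (fun s => dmin T0 g s = 1) with ht
  -- absolute values
  have hinvle : cp⁻¹ ≤ c0⁻¹ := by
    apply inv_anti₀ hc0pos
    linarith
  have habs : ∀ s ∈ t, |ρp s - ρ0 s| = (n s : ℝ) * (δ * (c0⁻¹ - cp⁻¹)) := by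
    intro s hs
    rw [ht, Finset.mem_filter] at hs
    rw [hρ0 s hs.2, hρp s hs.2, abs_sub_comm]
    rw [abs_of_nonneg]
    · ring
    · have h1 : (0:ℝ) ≤ (n s : ℝ) := Nat.cast_nonneg _
      have h2 : (0:ℝ) ≤ δ * (c0⁻¹ - cp⁻¹) := by
        apply mul_nonneg hδ0.le
        linarith
      nlinarith
  -- lower bound on the total count
  have hsum_n : Fintype.card A0 ≤ ∑ s ∈ t, n s := by
    set f : A0 → S := fun a => (hall1 a).choose with hf
    have hfs : ∀ a : A0, IsSol T0 g (f a) [a] := fun a => (hall1 a).choose_spec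
    have hft : ∀ a ∈ Finset.univ, f a ∈ t := by
      intro a _
      rw [ht, Finset.mem_filter]
      refine ⟨Finset.mem_univ _, ?_⟩
      have hub : dmin T0 g (f a) ≤ 1 := Nat.sInf_le ⟨[a], hfs a, rfl⟩
      have hlb : 1 ≤ dmin T0 g (f a) := by
        unfold dmin
        refine le_csInf ⟨1, ⟨[a], hfs a, rfl⟩⟩ ?_
        rintro l ⟨σ, hσ, rfl⟩
        exact isSol_len_pos hσ
      omega
    rw [← Finset.card_univ, Finset.card_eq_sum_card_fiberwise hft]
    apply Finset.sum_le_sum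
    intro s _
    simp only [hn, Nat.card_eq_fintype_card, Fintype.card_subtype]
    apply Finset.card_le_card
    intro a ha
    rw [Finset.mem_filter] at ha ⊢
    exact ⟨ha.1, ha.2 ▸ hfs a⟩
  have hsum_n' : c0 ≤ ∑ s ∈ t, (n s : ℝ) := by
    rw [hc0, ← Nat.cast_sum]
    exact_mod_cast hsum_n
  constructor
  · calc ∑ s ∈ t, |ρp s - ρ0 s| = ∑ s ∈ t, (n s : ℝ) * (δ * (c0⁻¹ - cp⁻¹)) :=
        Finset.sum_congr rfl habs
      _ = (∑ s ∈ t, (n s : ℝ)) * (δ * (c0⁻¹ - cp⁻¹)) := by rw [Finset.sum_mul]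
      _ ≥ c0 * (δ * (c0⁻¹ - cp⁻¹)) := by
          apply mul_le_mul_of_nonneg_right hsum_n'
          apply mul_nonneg hδ0.le
          linarith
      _ = δ * (1 - c0 / cp) := by
          field_simp
  · have h2 : 1 / (c0 + 1) ≤ 1 - c0 / cp := by
      have h3 : c0 / cp ≤ c0 / (c0 + 1) := by
        rw [div_le_div_iff₀ hcppos (by linarith)]
        nlinarith
      have h4 : 1 - c0 / (c0 + 1) = 1 / (c0 + 1) := by
        field_simp
        ring
      linarith
    calc δ / (c0 + 1) = δ * (1 / (c0 + 1)) := by ring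
      _ ≤ δ * (1 - c0 / cp) := mul_le_mul_of_nonneg_left h2 hδ0.le
end

section
/- Define sequences by f_0 = 1, f_i = 0 for i < 0, and f_l = Σ_{k=1}^K x_k f_{l−k} for l ≥ 1, where x_1, ..., x_K ≥ 0 with Σ_{k=1}^K x_k = 1. Then f_l ≤ 1 − x_1 + x_1² for all l ≥ 1. -/
/-- Recursion bound: if `f 0 = 1`, `f i = 0` for `i < 0`, and
`f l = Σ_{k=1}^K x_k f (l−k)` for `l ≥ 1` with `x_k ≥ 0` summing to 1, then
`f l ≤ 1 − x 1 + (x 1)²` for all `l ≥ 1`. -/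
theorem stmt14 (K : ℕ) (hK : 1 ≤ K) (x : ℕ → ℝ) (f : ℤ → ℝ)
    (hx0 : ∀ k, 0 ≤ x k) (hx1 : ∑ k ∈ Finset.Icc 1 K, x k = 1)
    (hf0 : f 0 = 1) (hfneg : ∀ i : ℤ, i < 0 → f i = 0)
    (hrec : ∀ l : ℤ, 1 ≤ l → f l = ∑ k ∈ Finset.Icc 1 K, x k * f (l - k)) :
    ∀ l : ℤ, 1 ≤ l → f l ≤ 1 - x 1 + (x 1) ^ 2 := by
  obtain ⟨m, rfl⟩ : ∃ m, K = m + 1 := ⟨K - 1, (Nat.succ_pred_eq_of_pos hK).symm⟩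
  -- nonnegativity of f
  have hfnonnegN : ∀ n : ℕ, 0 ≤ f n := by
    intro n
    induction n using Nat.strong_induction_on with
    | _ n ih =>
      rcases Nat.eq_zero_or_pos n with h0 | h1
      · subst h0; simp [hf0]
      · rw [hrec n (by exact_mod_cast h1)]
        apply Finset.sum_nonneg
        intro k hk
        apply mul_nonneg (hx0 k)
        rcases lt_or_ge ((n : ℤ) - k) 0 with hneg | hpos
        · rw [hfneg _ hneg]
        · have hk1 : 1 ≤ k := (Finset.mem_Icc.mp hk).1
          have he : ((n : ℤ) - k) = ((n - k : ℕ) : ℤ) := by omega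
          rw [he]
          exact ih _ (by omega)
  have hfnonneg : ∀ l : ℤ, 0 ≤ f l := by
    intro l
    rcases lt_or_ge l 0 with h | h
    · rw [hfneg _ h]
    · lift l to ℕ using h
      exact hfnonnegN l
  -- reindexing Icc sums over range
  have hIcc : ∀ g : ℕ → ℝ, ∑ k ∈ Finset.Icc 1 (m + 1), g k
      = ∑ i ∈ Finset.range (m + 1), g (i + 1) := by
    intro g
    rw [← Finset.Ico_add_one_right_eq_Icc, Finset.sum_Ico_eq_sum_range]
    norm_num [add_comm]
  -- the tail sums
  set T : ℕ → ℝ := fun j => ∑ i ∈ Finset.Ico j (m + 1), x (i + 1) with hT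
  have hTnonneg : ∀ j, 0 ≤ T j := fun j =>
    Finset.sum_nonneg fun i _ => hx0 _
  have hT0 : T 0 = 1 := by
    rw [hT]
    simp only []
    rw [← Finset.range_eq_Ico, ← hIcc x, hx1]
  have hTstep : ∀ j, j < m + 1 → T j = x (j + 1) + T (j + 1) := by
    intro j hj
    rw [hT]
    exact Finset.sum_eq_sum_Ico_succ_bot hj _
  have hTm : T m = x (m + 1) := by
    rw [hTstep m (by omega), hT]
    simp
  -- rewrite recursion over range
  have hrec' : ∀ l : ℤ, 1 ≤ l → f l = ∑ i ∈ Finset.range (m + 1),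
      x (i + 1) * f (l - (i + 1)) := by
    intro l hl
    rw [hrec l hl, hIcc (fun k => x k * f (l - k))]
    apply Finset.sum_congr rfl
    intro i _
    congr 2 <;> push_cast <;> ring
  -- the renewal identity
  have hI : ∀ n : ℕ, ∑ j ∈ Finset.range (m + 1), T j * f ((n : ℤ) - j) = 1 := by
    intro n
    induction n with
    | zero =>
      rw [Finset.sum_eq_single_of_mem 0 (Finset.mem_range.mpr (by omega))]
      · simp [hf0, hT0]
      · intro j _ hj0
        have : ((0 : ℕ) : ℤ) - j < 0 := by
          have : 0 < (j : ℤ) := by exact_mod_cast Nat.pos_of_ne_zero hj0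
          omega
        rw [hfneg _ this, mul_zero]
    | succ n ihn =>
      rw [Finset.sum_range_succ']
      have hA : ∀ k ∈ Finset.range m,
          T (k + 1) * f (((n + 1 : ℕ) : ℤ) - ((k + 1 : ℕ) : ℤ))
            = T (k + 1) * f ((n : ℤ) - k) := by
        intro k _
        congr 2 <;> push_cast <;> ring
      rw [Finset.sum_congr rfl hA]
      have hB : T 0 * f (((n + 1 : ℕ) : ℤ) - ((0 : ℕ) : ℤ))
          = ∑ i ∈ Finset.range (m + 1), x (i + 1) * f ((n : ℤ) - i) := by
        rw [hT0, one_mul,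
          show (((n + 1 : ℕ) : ℤ) - ((0 : ℕ) : ℤ)) = (n : ℤ) + 1 by push_cast; ring,
          hrec' ((n : ℤ) + 1) (by omega)]
        apply Finset.sum_congr rfl
        intro i _
        congr 2 <;> push_cast <;> ring
      rw [hB, Finset.sum_range_succ]
      have hsplit : ∀ k ∈ Finset.range m, T k * f ((n : ℤ) - k)
          = T (k + 1) * f ((n : ℤ) - k) + x (k + 1) * f ((n : ℤ) - k) := by
        intro k hk
        rw [hTstep k (by simp at hk; omega)]
        ring
      have key : ∑ j ∈ Finset.range (m + 1), T j * f ((n : ℤ) - j)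
          = ∑ k ∈ Finset.range m, T (k + 1) * f ((n : ℤ) - k)
            + (∑ i ∈ Finset.range m, x (i + 1) * f ((n : ℤ) - i)
              + x (m + 1) * f ((n : ℤ) - m)) := by
        rw [Finset.sum_range_succ, Finset.sum_congr rfl hsplit, Finset.sum_add_distrib, hTm]
        ring
      linarith [ihn, key]
  -- f ≤ 1
  have hfle1 : ∀ l : ℤ, f l ≤ 1 := by
    intro l
    rcases lt_or_ge l 0 with h | h
    · rw [hfneg _ h]; norm_num
    · lift l to ℕ using h
      have hid := hI l
      have hle : T 0 * f ((l : ℤ) - ((0 : ℕ) : ℤ))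
          ≤ ∑ j ∈ Finset.range (m + 1), T j * f ((l : ℤ) - j) :=
        Finset.single_le_sum (f := fun j => T j * f ((l : ℤ) - j))
          (fun j _ => mul_nonneg (hTnonneg j) (hfnonneg _)) (Finset.mem_range.mpr (by omega))
      simp only [hT0, one_mul, Nat.cast_zero, sub_zero] at hle
      linarith [hid]
  -- x 1 ≤ 1
  have hx1le : x 1 ≤ 1 := by
    have h1 : T 0 = x 1 + T 1 := hTstep 0 (by omega)
    have := hTnonneg 1
    linarith [hT0]
  -- main loop
  intro l hl
  rcases eq_or_lt_of_le hl with h1 | h2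
  · -- l = 1
    have hone : f 1 = x 1 := by
      rw [hrec 1 le_rfl]
      rw [Finset.sum_eq_single_of_mem 1 (Finset.mem_Icc.mpr ⟨le_rfl, by omega⟩)]
      · simp [hf0]
      · intro b hb hb1
        have hb2 : 2 ≤ b := by
          have := (Finset.mem_Icc.mp hb).1; omega
        rw [hfneg _ (by omega), mul_zero]
    rw [← h1, hone]
    nlinarith [sq_nonneg (1 - x 1)]
  · -- l ≥ 2
    set a := f (l - 1) with ha
    have ha0 : 0 ≤ a := hfnonneg _
    -- inequality 1 : f l ≤ x 1 * a + (1 - x 1)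
    have hi1 : f l ≤ x 1 * a + (1 - x 1) := by
      rw [hrec l hl]
      have hmem : (1 : ℕ) ∈ Finset.Icc 1 (m + 1) := Finset.mem_Icc.mpr ⟨le_rfl, by omega⟩
      rw [← Finset.add_sum_erase _ _ hmem]
      have hb : ∑ k ∈ (Finset.Icc 1 (m + 1)).erase 1, x k * f (l - k)
          ≤ ∑ k ∈ (Finset.Icc 1 (m + 1)).erase 1, x k := by
        apply Finset.sum_le_sum
        intro k _
        calc x k * f (l - k) ≤ x k * 1 :=
              mul_le_mul_of_nonneg_left (hfle1 _) (hx0 k)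
          _ = x k := mul_one _
      have hsum : ∑ k ∈ (Finset.Icc 1 (m + 1)).erase 1, x k = 1 - x 1 := by
        have := Finset.add_sum_erase _ x hmem
        linarith [hx1]
      have hc : x 1 * f (l - ((1 : ℕ) : ℤ)) = x 1 * a := by
        rw [ha]
        norm_num
      linarith [hb, hsum, hc]
    -- inequality 2 : f l + (1 - x 1) * a ≤ 1
    have hi2 : f l + (1 - x 1) * a ≤ 1 := by
      rcases Nat.eq_zero_or_pos m with hm0 | hm1
      · subst hm0
        have hx11 : x 1 = 1 := by simpa using hx1
        rw [hx11]
        simpa using hfle1 l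
      · obtain ⟨n, rfl, hn1⟩ : ∃ n : ℕ, l = (n : ℤ) ∧ 1 ≤ n :=
          ⟨l.toNat, by omega, by omega⟩
        have hid := hI n
        have hT1 : T 1 = 1 - x 1 := by
          have := hTstep 0 (by omega)
          linarith [hT0]
        have hsub : ({0, 1} : Finset ℕ) ⊆ Finset.range (m + 1) := by
          intro j hj
          simp only [Finset.mem_insert, Finset.mem_singleton] at hj
          rcases hj with rfl | rfl <;> exact Finset.mem_range.mpr (by omega)
        have hle : ∑ j ∈ ({0, 1} : Finset ℕ), T j * f ((n : ℤ) - j)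
            ≤ ∑ j ∈ Finset.range (m + 1), T j * f ((n : ℤ) - j) := by
          apply Finset.sum_le_sum_of_subset_of_nonneg hsub
          intro j _ _
          exact mul_nonneg (hTnonneg j) (hfnonneg _)
        rw [Finset.sum_pair (by norm_num)] at hle
        simp only [Nat.cast_zero, sub_zero, Nat.cast_one] at hle
        rw [hT0, one_mul, hT1] at hle
        linarith [hid, ha]
    have hi2' : f l ≤ 1 - (1 - x 1) * a := by linarith
    have p1 := mul_le_mul_of_nonneg_left hi1 (sub_nonneg.mpr hx1le)
    have p2 := mul_le_mul_of_nonneg_left hi2' (hx0 1)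
    nlinarith [p1, p2]
end

section
/- Define f_0 = 1, f_i = 0 for i < 0, f_l = Σ_{k=1}^K x_k f_{l−k} with x_k ≥ 0 and Σ_{k=1}^K x_k = 1. Then for all l ≥ 1, −ln f_l ≥ 1 − f_l ≥ x_1(1 − x_1). -/
/-- With the same recursion (and `x 1 > 0` so that `f l > 0`):
`−ln f_l ≥ 1 − f_l ≥ x_1(1 − x_1)` for all `l ≥ 1`. -/
theorem stmt15 (K : ℕ) (hK : 1 ≤ K) (x : ℕ → ℝ) (f : ℤ → ℝ)
    (hx0 : ∀ k, 0 ≤ x k) (hx1pos : 0 < x 1) (hx1 : ∑ k ∈ Finset.Icc 1 K, x k = 1)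
    (hf0 : f 0 = 1) (hfneg : ∀ i : ℤ, i < 0 → f i = 0)
    (hrec : ∀ l : ℤ, 1 ≤ l → f l = ∑ k ∈ Finset.Icc 1 K, x k * f (l - k)) :
    ∀ l : ℤ, 1 ≤ l → -Real.log (f l) ≥ 1 - f l ∧ 1 - f l ≥ x 1 * (1 - x 1) := by
  have hmem1 : (1 : ℕ) ∈ Finset.Icc 1 K := Finset.mem_Icc.mpr ⟨le_refl 1, hK⟩
  have hx1le : x 1 ≤ 1 := by
    rw [← hx1]
    exact Finset.single_le_sum (fun k _ => hx0 k) hmem1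
  -- 0 ≤ f ≤ 1 on naturals
  have hbound : ∀ n : ℕ, 0 ≤ f n ∧ f n ≤ 1 := by
    intro n
    induction n using Nat.strong_induction_on with
    | _ n ih =>
      match n with
      | 0 => simp [hf0]
      | Nat.succ m =>
        have hterm : ∀ j : ℤ, j < ((m + 1 : ℕ) : ℤ) → 0 ≤ f j ∧ f j ≤ 1 := by
          intro j hj
          rcases lt_or_ge j 0 with h | h
          · simp [hfneg j h]
          · lift j to ℕ using h
            exact ih j (by exact_mod_cast hj)
        have h1 : (1 : ℤ) ≤ ((m + 1 : ℕ) : ℤ) := by push_cast; omega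
        rw [hrec _ h1]
        constructor
        · apply Finset.sum_nonneg
          intro k hk
          have hk1 : 1 ≤ k := (Finset.mem_Icc.mp hk).1
          exact mul_nonneg (hx0 k) (hterm _ (by omega)).1
        · calc ∑ k ∈ Finset.Icc 1 K, x k * f (((m + 1 : ℕ) : ℤ) - k)
              ≤ ∑ k ∈ Finset.Icc 1 K, x k := by
                apply Finset.sum_le_sum
                intro k hk
                have hk1 : 1 ≤ k := (Finset.mem_Icc.mp hk).1
                have h2 := (hterm (((m + 1 : ℕ) : ℤ) - k) (by omega)).2
                nlinarith [hx0 k]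
            _ = 1 := hx1
  have hb : ∀ j : ℤ, 0 ≤ f j ∧ f j ≤ 1 := by
    intro j
    rcases lt_or_ge j 0 with h | h
    · simp [hfneg j h]
    · lift j to ℕ using h; exact hbound j
  -- positivity on naturals
  have hpos : ∀ n : ℕ, 0 < f n := by
    intro n
    induction n with
    | zero => simp [hf0]
    | succ m ihm =>
      have h1 : (1 : ℤ) ≤ ((m + 1 : ℕ) : ℤ) := by push_cast; omega
      rw [hrec _ h1]
      have hsingle : x 1 * f (((m + 1 : ℕ) : ℤ) - (1 : ℕ))
          ≤ ∑ k ∈ Finset.Icc 1 K, x k * f (((m + 1 : ℕ) : ℤ) - k) :=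
        Finset.single_le_sum (f := fun k => x k * f (((m + 1 : ℕ) : ℤ) - k))
          (fun k _ => mul_nonneg (hx0 k) (hb _).1) hmem1
      have harg : ((m + 1 : ℕ) : ℤ) - ((1 : ℕ) : ℤ) = (m : ℤ) := by push_cast; ring
      rw [harg] at hsingle
      nlinarith [mul_pos hx1pos ihm]
  -- key lemma: 1 - f l ≥ (1 - x 1) * f (l - 1)
  have hB : ∀ n : ℕ, (1 - x 1) * f ((n : ℤ) - 1) ≤ 1 - f n := by
    intro n
    induction n using Nat.strong_induction_on with
    | _ n ih =>
      match n with
      | 0 => simp [hf0, hfneg (-1 : ℤ) (by norm_num)]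
      | Nat.succ m =>
        have hBall : ∀ j : ℤ, j < ((m + 1 : ℕ) : ℤ) → (1 - x 1) * f (j - 1) ≤ 1 - f j := by
          intro j hj
          rcases lt_or_ge j 0 with h | h
          · rw [hfneg j h, hfneg (j - 1) (by omega)]
            norm_num
          · lift j to ℕ using h
            exact ih j (by exact_mod_cast hj)
        match m with
        | 0 =>
          have hf1 : f 1 = x 1 := by
            rw [hrec 1 le_rfl, Finset.sum_eq_single 1]
            · norm_num [hf0]
            · intro k hk hne
              have hk1 : 1 ≤ k := (Finset.mem_Icc.mp hk).1
              rw [hfneg ((1 : ℤ) - k) (by omega)]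
              ring
            · intro h; exact absurd hmem1 h
          have : ((0 + 1 : ℕ) : ℤ) = (1 : ℤ) := by norm_num
          rw [this, hf1]
          norm_num [hf0]
        | Nat.succ p =>
          set l : ℤ := ((p + 1 + 1 : ℕ) : ℤ) with hl
          have h1 : (1 : ℤ) ≤ l := by rw [hl]; push_cast; omega
          have h1' : (1 : ℤ) ≤ l - 1 := by rw [hl]; push_cast; omega
          have step1 : 1 - f l = ∑ k ∈ Finset.Icc 1 K, x k * (1 - f (l - k)) := by
            have heq : ∑ k ∈ Finset.Icc 1 K, x k * (1 - f (l - k))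
                = (∑ k ∈ Finset.Icc 1 K, x k) - ∑ k ∈ Finset.Icc 1 K, x k * f (l - k) := by
              rw [← Finset.sum_sub_distrib]
              exact Finset.sum_congr rfl (fun k _ => by ring)
            rw [heq, hx1, ← hrec l h1]
          have step2 : ∑ k ∈ Finset.Icc 1 K, x k * ((1 - x 1) * f (l - 1 - k))
              ≤ ∑ k ∈ Finset.Icc 1 K, x k * (1 - f (l - k)) := by
            apply Finset.sum_le_sum
            intro k hk
            have hk1 : 1 ≤ k := (Finset.mem_Icc.mp hk).1
            have h3 := hBall (l - k) (by omega)
            have harg : l - (k : ℤ) - 1 = l - 1 - k := by ring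
            rw [harg] at h3
            nlinarith [hx0 k]
          have step3 : ∑ k ∈ Finset.Icc 1 K, x k * ((1 - x 1) * f (l - 1 - k))
              = (1 - x 1) * f (l - 1) := by
            rw [hrec (l - 1) h1', Finset.mul_sum]
            exact Finset.sum_congr rfl (fun k _ => by ring)
          rw [step1]
          rw [← step3]
          exact step2
  -- f l ≤ x1 * f (l-1) + (1 - x1)
  have hA : ∀ l : ℤ, 1 ≤ l → f l ≤ x 1 * f (l - 1) + (1 - x 1) := by
    intro l hl
    rw [hrec l hl]
    have hsplit : ∑ k ∈ Finset.Icc 1 K, x k * f (l - k)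
        = x 1 * f (l - (1 : ℕ)) + ∑ k ∈ (Finset.Icc 1 K).erase 1, x k * f (l - k) :=
      (Finset.add_sum_erase _ _ hmem1).symm
    have hxsplit : x 1 + ∑ k ∈ (Finset.Icc 1 K).erase 1, x k = 1 := by
      rw [Finset.add_sum_erase _ _ hmem1]; exact hx1
    have htail : ∑ k ∈ (Finset.Icc 1 K).erase 1, x k * f (l - k)
        ≤ ∑ k ∈ (Finset.Icc 1 K).erase 1, x k := by
      apply Finset.sum_le_sum
      intro k hk
      nlinarith [hx0 k, (hb (l - k)).1, (hb (l - k)).2]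
    have harg : l - ((1 : ℕ) : ℤ) = l - 1 := by push_cast; ring
    rw [hsplit, harg]
    linarith
  -- conclusion
  intro l hl
  have hl0 : 0 ≤ l := by omega
  lift l to ℕ using hl0 with n
  have hflpos : 0 < f n := hpos n
  refine ⟨?_, ?_⟩
  · have := Real.log_le_sub_one_of_pos hflpos
    linarith
  · have hAn := hA n (by exact_mod_cast hl)
    have hBn := hB n
    rcases le_total (f ((n : ℤ) - 1)) (x 1) with h | h
    · nlinarith [hx0 1, (hb ((n : ℤ) - 1)).1]
    · nlinarith [hx1le]
end

section
/- Let p be a probability distribution over solvable states of a DSMDP M₀ and 0 < δ < 1. Then J_explore(M₀; p, δ) = H[p] + D_KL(p' ‖ ρ'_{0,δ}) − log((1−δ)/δ), where ρ_{0,δ}(s) = (δ/(1−δ)) q_{M₀,δ}(s), and p', ρ'_{0,δ} extend p, ρ_{0,δ} by a dummy state s_d with p'(s_d) = 0 and ρ'_{0,δ}(s_d) = 1 − Σ_{s} ρ_{0,δ}(s) (nonnegative when M₀ is solution-separable). In particular, if p ≢ ρ_{0,δ} on the solvable states, then J_explore(M₀; p, δ) > H[p] − log((1−δ)/δ). -/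
open Real in
lemma gibbs_strict {ι : Type*} [Fintype ι] (f g : ι → ℝ)
    (hf : ∀ i, 0 ≤ f i) (hg : ∀ i, 0 ≤ g i) (hfg : ∀ i, f i ≠ 0 → g i ≠ 0)
    (hsum : ∑ i, g i ≤ ∑ i, f i) (i₀ : ι) (hne : f i₀ ≠ g i₀) :
    0 < ∑ i, f i * Real.log (f i / g i) := by
  have key : ∀ i, f i - g i ≤ f i * Real.log (f i / g i) := by
    intro i
    rcases eq_or_ne (f i) 0 with h | h
    · simp only [h, zero_mul, zero_sub, neg_nonpos]
      linarith [hg i]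
    · have hf' : 0 < f i := (hf i).lt_of_ne (Ne.symm h)
      have hg' : 0 < g i := (hg i).lt_of_ne (Ne.symm (hfg i h))
      have hx : 0 < g i / f i := div_pos hg' hf'
      have h1 := Real.log_le_sub_one_of_pos hx
      have hlog : Real.log (f i / g i) = - Real.log (g i / f i) := by
        rw [← Real.log_inv, inv_div]
      rw [hlog]
      have h2 : f i * Real.log (g i / f i) ≤ f i * (g i / f i - 1) :=
        mul_le_mul_of_nonneg_left h1 hf'.le
      have h3 : f i * (g i / f i - 1) = g i - f i := by field_simp
      linarith
  have keystrict : f i₀ - g i₀ < f i₀ * Real.log (f i₀ / g i₀) := by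
    rcases eq_or_ne (f i₀) 0 with h | h
    · have hg' : 0 < g i₀ := (hg i₀).lt_of_ne (Ne.symm (fun e => hne (by rw [h, e])))
      simp only [h, zero_mul, zero_sub, neg_neg]
      linarith
    · have hf' : 0 < f i₀ := (hf i₀).lt_of_ne (Ne.symm h)
      have hg' : 0 < g i₀ := (hg i₀).lt_of_ne (Ne.symm (hfg i₀ h))
      have hx : 0 < g i₀ / f i₀ := div_pos hg' hf'
      have hx1 : g i₀ / f i₀ ≠ 1 := by
        intro e
        exact hne ((div_eq_one_iff_eq hf'.ne').mp e).symm
      have h1 := Real.log_lt_sub_one_of_pos hx hx1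
      have hlog : Real.log (f i₀ / g i₀) = - Real.log (g i₀ / f i₀) := by
        rw [← Real.log_inv, inv_div]
      rw [hlog]
      have h2 : f i₀ * Real.log (g i₀ / f i₀) < f i₀ * (g i₀ / f i₀ - 1) :=
        (mul_lt_mul_iff_right₀ hf').mpr h1
      have h3 : f i₀ * (g i₀ / f i₀ - 1) = g i₀ - f i₀ := by field_simp
      linarith
  have hlt : ∑ i, (f i - g i) < ∑ i, f i * Real.log (f i / g i) :=
    Finset.sum_lt_sum (fun i _ => key i) ⟨i₀, Finset.mem_univ i₀, keystrict⟩
  rw [Finset.sum_sub_distrib] at hlt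
  linarith

lemma list_summable {A : Type*} [Fintype A] {r : ℝ} (hr : 0 ≤ r)
    (h : (Fintype.card A : ℝ) * r < 1) :
    Summable (fun σ : List A => r ^ σ.length) ∧
      ∑' σ : List A, r ^ σ.length = (1 - (Fintype.card A : ℝ) * r)⁻¹ := by
  have hcr : 0 ≤ (Fintype.card A : ℝ) * r := mul_nonneg (Nat.cast_nonneg _) hr
  have hfib : ∀ n : ℕ, Summable (fun _ : Fin n → A => r ^ n) := fun n => summable_of_finite_support (Set.toFinite _)
  have hfibsum : ∀ n : ℕ, ∑' _ : Fin n → A, r ^ n = ((Fintype.card A : ℝ) * r) ^ n := by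
    intro n
    rw [tsum_fintype, Finset.sum_const, Finset.card_univ, Fintype.card_fun, Fintype.card_fin,
      nsmul_eq_mul, mul_pow, Nat.cast_pow]
  have hgeo : Summable (fun n : ℕ => ((Fintype.card A : ℝ) * r) ^ n) :=
    summable_geometric_of_lt_one hcr h
  have hsig : Summable (fun x : Σ n : ℕ, Fin n → A => r ^ x.1) := by
    rw [summable_sigma_of_nonneg (fun x => pow_nonneg hr _)]
    refine ⟨fun n => hfib n, ?_⟩
    simpa only [hfibsum] using hgeo
  have hcomp : (fun σ : List A => r ^ σ.length) =
      (fun x : Σ n : ℕ, Fin n → A => r ^ x.1) ∘ List.equivSigmaTuple := rfl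
  have he : Summable (fun σ : List A => r ^ σ.length) := by
    rw [hcomp, Equiv.summable_iff]
    exact hsig
  refine ⟨he, ?_⟩
  calc ∑' σ : List A, r ^ σ.length
      = ∑' x : Σ n : ℕ, Fin n → A, r ^ x.1 := by
        rw [hcomp, Function.comp_def]
        exact List.equivSigmaTuple.tsum_eq (fun x : Σ n : ℕ, Fin n → A => r ^ x.1)
    _ = ∑' n : ℕ, ∑' _ : Fin n → A, r ^ n := Summable.tsum_sigma hsig
    _ = ∑' n : ℕ, ((Fintype.card A : ℝ) * r) ^ n := by simp only [hfibsum]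
    _ = (1 - (Fintype.card A : ℝ) * r)⁻¹ := tsum_geometric_of_lt_one hcr h

/-- Identity `J_explore(M₀;p,δ) = H[p] + D_KL(p'‖ρ'_{0,δ}) − log((1−δ)/δ)` (with a dummy
state absorbing the remaining `ρ`-mass), and the consequent strict lower bound
`J_explore > H[p] − log((1−δ)/δ)` when `p ≢ ρ_{0,δ}`. -/
theorem stmt17 {S A : Type*} [Fintype S] [Fintype A]
    (T : S → A → S) (g : S)
    (hsep : ∀ (σ : List A) (s s' : S), IsSol T g s σ → IsSol T g s' σ → s = s')
    (δ : ℝ) (hδ0 : 0 < δ) (hδ1 : δ < 1)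
    (p : S → ℝ) (hp0 : ∀ s, 0 ≤ p s) (hp1 : ∑ s, p s = 1)
    (hsupp : ∀ s, p s ≠ 0 → ∃ σ : List A, IsSol T g s σ) :
    let q : S → ℝ := fun s => ∑' σ : {σ : List A // IsSol T g s σ},
      ((1 - δ) / (Fintype.card A : ℝ)) ^ σ.1.length
    let ρ : S → ℝ := fun s => (δ / (1 - δ)) * q s
    let p' : Option S → ℝ := fun x => x.elim 0 p
    let ρ' : Option S → ℝ := fun x => x.elim (1 - ∑ s, ρ s) ρ
    let J : ℝ := ∑ s, p s * (-Real.log (q s))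
    (J = (∑ s, Real.negMulLog (p s)) +
          (∑ x : Option S, p' x * Real.log (p' x / ρ' x)) - Real.log ((1 - δ) / δ)) ∧
    ((∃ s, p s ≠ ρ s) →
      J > (∑ s, Real.negMulLog (p s)) - Real.log ((1 - δ) / δ)) := by
  intro q ρ p' ρ' J
  classical
  have h1δ : 0 < 1 - δ := by linarith
  obtain ⟨s₀, -, hs₀⟩ := Finset.exists_ne_zero_of_sum_ne_zero
    (s := (Finset.univ : Finset S)) (f := p) (by rw [hp1]; exact one_ne_zero)
  obtain ⟨σ₀, hσ₀⟩ := hsupp s₀ hs₀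
  haveI : Nonempty A := by
    cases σ₀ with
    | nil => exact absurd rfl hσ₀.1
    | cons a l => exact ⟨a⟩
  have hcA : 0 < (Fintype.card A : ℝ) := by exact_mod_cast Fintype.card_pos
  set r : ℝ := (1 - δ) / (Fintype.card A : ℝ) with hr_def
  have hr0 : 0 < r := div_pos h1δ hcA
  have hcr : (Fintype.card A : ℝ) * r = 1 - δ := by rw [hr_def]; field_simp
  have hcr1 : (Fintype.card A : ℝ) * r < 1 := by rw [hcr]; linarith
  obtain ⟨hLs, hLt⟩ := list_summable hr0.le hcr1
  have hLt' : ∑' σ : List A, r ^ σ.length = δ⁻¹ := by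
    rw [hLt, hcr]; congr 1; ring
  have hfib : ∀ s : S, Summable
      (fun σ : {σ : List A // IsSol T g s σ} => r ^ (σ : List A).length) :=
    fun s => hLs.subtype {σ : List A | IsSol T g s σ}
  have hq0 : ∀ s, 0 ≤ q s := fun s => tsum_nonneg (fun σ => pow_nonneg hr0.le _)
  have hqpos : ∀ s, p s ≠ 0 → 0 < q s := by
    intro s hps
    obtain ⟨σ, hσ⟩ := hsupp s hps
    have h2 := Summable.le_tsum (hfib s) ⟨σ, hσ⟩ (fun j _ => pow_nonneg hr0.le _)
    calc (0:ℝ) < r ^ σ.length := pow_pos hr0 _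
      _ ≤ q s := h2
  have hnonneg : ∀ x : Σ s : S, {σ : List A // IsSol T g s σ},
      (0:ℝ) ≤ r ^ (x.2 : List A).length := fun x => pow_nonneg hr0.le _
  have hsig : Summable
      (fun x : Σ s : S, {σ : List A // IsSol T g s σ} => r ^ (x.2 : List A).length) := by
    rw [summable_sigma_of_nonneg hnonneg]
    exact ⟨hfib, Summable.of_finite⟩
  have hinj : Function.Injective (fun x : Σ s : S, {σ : List A // IsSol T g s σ} =>
      ((x.2 : List A).head x.2.2.1, (x.2 : List A).tail)) := by
    rintro ⟨s, σ, hσ⟩ ⟨s', σ', hσ'⟩ h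
    simp only [Prod.mk.injEq] at h
    have hl : σ = σ' := by
      rw [← List.cons_head_tail hσ.1, ← List.cons_head_tail hσ'.1, h.1, h.2]
    subst hl
    have hss : s = s' := hsep σ s s' hσ hσ'
    subst hss
    rfl
  have hg_summ : Summable (fun y : A × List A => r * r ^ y.2.length) := by
    have h3 : Summable (fun x : Σ _ : A, List A => r * r ^ x.2.length) := by
      rw [summable_sigma_of_nonneg (fun x => mul_nonneg hr0.le (pow_nonneg hr0.le _))]
      exact ⟨fun a => hLs.mul_left r, Summable.of_finite⟩
    have hc : (fun x : Σ _ : A, List A => r * r ^ x.2.length) =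
        (fun y : A × List A => r * r ^ y.2.length) ∘ (Equiv.sigmaEquivProd A (List A)) := rfl
    rw [hc, Equiv.summable_iff] at h3
    exact h3
  have hg_tsum : ∑' y : A × List A, r * r ^ y.2.length = (1 - δ) * δ⁻¹ := by
    rw [Summable.tsum_prod' hg_summ (fun a => hLs.mul_left r)]
    have h4 : ∀ a : A, ∑' l : List A, r * r ^ l.length = r * δ⁻¹ := by
      intro a; rw [tsum_mul_left, hLt']
    rw [tsum_fintype]
    calc ∑ a : A, ∑' l : List A, r * r ^ l.length
        = ∑ _a : A, r * δ⁻¹ := Finset.sum_congr rfl (fun a _ => h4 a)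
      _ = (Fintype.card A : ℝ) * (r * δ⁻¹) := by
          rw [Finset.sum_const, Finset.card_univ, nsmul_eq_mul]
      _ = (1 - δ) * δ⁻¹ := by rw [← mul_assoc, hcr]
  have hle : ∀ x : Σ s : S, {σ : List A // IsSol T g s σ},
      r ^ (x.2 : List A).length ≤ r * r ^ (x.2 : List A).tail.length := by
    rintro ⟨s, σ, hσ⟩
    have h5 : σ.length = σ.tail.length + 1 := by
      have hpos : 0 < σ.length := List.length_pos_iff.mpr hσ.1
      rw [List.length_tail]
      omega
    rw [h5, pow_succ]
    exact le_of_eq (mul_comm _ _)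
  have hqsum_le : ∑ s, q s ≤ (1 - δ) * δ⁻¹ := by
    have h1 : ∑ s, q s
        = ∑' x : Σ s : S, {σ : List A // IsSol T g s σ}, r ^ (x.2 : List A).length := by
      rw [Summable.tsum_sigma hsig, tsum_fintype]
    rw [h1]
    calc ∑' x : Σ s : S, {σ : List A // IsSol T g s σ}, r ^ (x.2 : List A).length
        ≤ ∑' y : A × List A, r * r ^ y.2.length :=
          Summable.tsum_le_tsum_of_inj _ hinj
            (fun c _ => mul_nonneg hr0.le (pow_nonneg hr0.le _)) hle hsig hg_summ
      _ = (1 - δ) * δ⁻¹ := hg_tsum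
  have hρ0 : ∀ s, 0 ≤ ρ s := fun s => mul_nonneg (div_pos hδ0 h1δ).le (hq0 s)
  have hρsum : ∑ s, ρ s ≤ 1 := by
    have h6 : ∑ s, ρ s = (δ / (1 - δ)) * ∑ s, q s := by
      rw [Finset.mul_sum]
    rw [h6]
    have h7 : (δ / (1 - δ)) * ((1 - δ) * δ⁻¹) = 1 := by field_simp
    calc (δ / (1 - δ)) * ∑ s, q s ≤ (δ / (1 - δ)) * ((1 - δ) * δ⁻¹) :=
        mul_le_mul_of_nonneg_left hqsum_le (by positivity)
      _ = 1 := h7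
  have hterm : ∀ s, p s * (-Real.log (q s)) =
      Real.negMulLog (p s) + p s * Real.log (p s / ρ s) - p s * Real.log ((1 - δ) / δ) := by
    intro s
    rcases eq_or_ne (p s) 0 with h | h
    · simp [h, Real.negMulLog]
    · have hps : 0 < p s := (hp0 s).lt_of_ne (Ne.symm h)
      have hq : 0 < q s := hqpos s h
      have hρ : 0 < ρ s := mul_pos (div_pos hδ0 h1δ) hq
      have hlogρ : Real.log (ρ s) = Real.log (δ / (1 - δ)) + Real.log (q s) := by
        show Real.log ((δ / (1 - δ)) * q s) = _
        rw [Real.log_mul (by positivity) hq.ne']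
      have hlogdiv : Real.log (p s / ρ s) = Real.log (p s) - Real.log (ρ s) :=
        Real.log_div h hρ.ne'
      have hll : Real.log ((1 - δ) / δ) = - Real.log (δ / (1 - δ)) := by
        rw [← Real.log_inv, inv_div]
      rw [Real.negMulLog, hlogdiv, hlogρ, hll]
      ring
  have hKL : (∑ x : Option S, p' x * Real.log (p' x / ρ' x)) =
      ∑ s, p s * Real.log (p s / ρ s) := by
    rw [Fintype.sum_option]
    simp [p', ρ']
  have hid : J = (∑ s, Real.negMulLog (p s)) +
      (∑ x : Option S, p' x * Real.log (p' x / ρ' x)) - Real.log ((1 - δ) / δ) := by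
    calc J = ∑ s, (Real.negMulLog (p s) + p s * Real.log (p s / ρ s)
            - p s * Real.log ((1 - δ) / δ)) :=
          Finset.sum_congr rfl fun s _ => hterm s
      _ = (∑ s, Real.negMulLog (p s)) + (∑ s, p s * Real.log (p s / ρ s))
            - (∑ s, p s) * Real.log ((1 - δ) / δ) := by
          rw [Finset.sum_sub_distrib, Finset.sum_add_distrib, ← Finset.sum_mul]
      _ = _ := by rw [hp1, one_mul, ← hKL]
  refine ⟨hid, ?_⟩
  rintro ⟨s₁, hs₁⟩
  have hKLpos : 0 < ∑ x : Option S, p' x * Real.log (p' x / ρ' x) := by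
    apply gibbs_strict p' ρ' ?_ ?_ ?_ ?_ (some s₁) hs₁
    · rintro (_ | s)
      · exact le_refl 0
      · exact hp0 s
    · rintro (_ | s)
      · show (0:ℝ) ≤ 1 - ∑ s, ρ s
        linarith
      · exact hρ0 s
    · rintro (_ | s) h
      · exact absurd rfl h
      · exact (mul_pos (div_pos hδ0 h1δ) (hqpos s h)).ne'
    · rw [Fintype.sum_option, Fintype.sum_option]
      simp [p', ρ', hp1]
  rw [hid]
  linarith
end
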